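/- arXiv:1606.03829 — 3 statements merged into one kernel-verified Lean document; each statement's English description precedes it below -/
import Mathlib

section
/- Let P be a finite graded poset of rank n+1 with minimum 0̂ and maximum 1̂ such that P ∖ {1̂} is simplicial, and let G be a group of automorphisms of P whose action is good. Then for every S ⊆ {1,…,n−1}, β_P(S) + β_P(S ∪ {n}) = b_n(S) · α_P({n}), where b_n(S) is the number of permutations in 𝔖_n with descent set S. -/
open scoped Classical

noncomputable section

/-! ### Permutation combinatorics -/

/-- The value `w(i)` (1-based, in `{1,…,n}`) of a permutation `w` of `{1,…,n}`,
realized as `Equiv.Perm (Fin n)`. -/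
def permApp {n : ℕ} (w : Equiv.Perm (Fin n)) (i : ℕ) : ℕ :=
  if h : i - 1 < n then (w ⟨i - 1, h⟩ : ℕ) + 1 else 0

/-- The descent set of a permutation, a subset of `{1,…,n-1}`. -/
def descentSet {n : ℕ} (w : Equiv.Perm (Fin n)) : Finset ℕ :=
  (Finset.Icc 1 (n - 1)).filter fun i => permApp w (i + 1) < permApp w i

/-- `numDescentSet m T` is the number of permutations in `𝔖_m` with descent set `T`. -/
def numDescentSet (m : ℕ) (T : Finset ℕ) : ℕ :=
  Nat.card {w : Equiv.Perm (Fin m) // descentSet w = T}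

/-- The Coxeter length (number of inversions) of a permutation. -/
def invCount {n : ℕ} (w : Equiv.Perm (Fin n)) : ℕ :=
  (Finset.univ.filter fun p : Fin n × Fin n => p.1 < p.2 ∧ w p.2 < w p.1).card

/-- For `S = {s_1 < s_2 < ⋯ < s_k} ⊆ {1,…,n-1}`, `sElt n S j = s_j`, with the
conventions `s_0 = 0` and `s_j = n` for `j > k`. -/
def sElt (n : ℕ) (S : Finset ℕ) (j : ℕ) : ℕ :=
  if j = 0 then 0 else if j ≤ S.card then (S.sort (· ≤ ·)).getD (j - 1) 0 else n

lemma sElt_of_gt (n : ℕ) (S : Finset ℕ) (j : ℕ) (h : S.card < j) : sElt n S j = n := by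
  unfold sElt
  rw [if_neg (by omega), if_neg (by omega)]

/-! ### Standard Young tableaux -/

/-- A standard Young tableau of shape `μ`: a filling of the cells of `μ` by the numbers
`1,…,μ.card`, each used once, strictly increasing along rows and columns
(the entry of a non-cell is `0`). -/
structure SYT (μ : YoungDiagram) where
  entry : ℕ → ℕ → ℕ
  entry_eq_zero : ∀ i j, (i, j) ∉ μ → entry i j = 0
  row_strict : ∀ i j1 j2, j1 < j2 → (i, j2) ∈ μ → entry i j1 < entry i j2
  col_strict : ∀ i1 i2 j, i1 < i2 → (i2, j) ∈ μ → entry i1 j < entry i2 j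
  bijOn : Set.BijOn (fun p : ℕ × ℕ => entry p.1 p.2) ↑μ.cells ↑(Finset.Icc 1 μ.card)

/-- The descent set of a standard Young tableau: those `k` such that `k+1` lies in a
strictly lower row than `k`. -/
def SYT.des {μ : YoungDiagram} (Q : SYT μ) : Finset ℕ :=
  (Finset.Icc 1 (μ.card - 1)).filter fun k =>
    ∃ p1 ∈ μ.cells, ∃ p2 ∈ μ.cells,
      Q.entry p1.1 p1.2 = k ∧ Q.entry p2.1 p2.2 = k + 1 ∧ p1.1 < p2.1

/-- `fSYTRow μ t` is the number of standard Young tableaux of shape `μ` whose first row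
contains the numbers `1,…,t`. -/
def fSYTRow (μ : YoungDiagram) (t : ℕ) : ℕ :=
  Nat.card {Q : SYT μ // ∀ k, 1 ≤ k → k ≤ t → ∃ j, (0, j) ∈ μ ∧ Q.entry 0 j = k}

/-! ### Irreducible characters of the symmetric group, via Jacobi–Trudi -/

/-- The number of functions `f : Fin n → Fin k` which are invariant under `g` and whose
fiber over `i` has `c i` elements.  For `c` a composition of `n`, the function
`g ↦ fixedYoungFns n k c g` is the character of the permutation representation of `𝔖_n`
on ordered set partitions of `{1,…,n}` of type `c`, i.e. of the representation induced
from the trivial representation of the corresponding Young subgroup. -/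
def fixedYoungFns (n k : ℕ) (c : Fin k → ℤ) (g : Equiv.Perm (Fin n)) : ℕ :=
  Nat.card {f : Fin n → Fin k //
    (∀ x, f (g x) = f x) ∧ ∀ i, ((Nat.card {x : Fin n // f x = i} : ℕ) : ℤ) = c i}

/-- The irreducible character `χ^μ` of `𝔖_n` associated to a partition `μ` of `n`
(encoded as a Young diagram with `n` cells), defined through the Jacobi–Trudi
determinantal formula `χ^μ = det (h_{μ_i - i + j})`. -/
def chi (n : ℕ) (μ : YoungDiagram) (g : Equiv.Perm (Fin n)) : ℤ :=
  ∑ σ : Equiv.Perm (Fin μ.rowLens.length),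
    ((Equiv.Perm.sign σ : ℤˣ) : ℤ) *
      (fixedYoungFns n μ.rowLens.length
        (fun i => ((μ.rowLen (i : ℕ) : ℕ) : ℤ) - ((i : ℕ) : ℤ) + ((σ i : ℕ) : ℤ)) g : ℤ)

/-! ### Posets, rank selection, maximal chains and characters -/

/-- The maximal chains of the subposet induced on a subset `A` of a poset. -/
def maxChainsIn {P : Type*} [Preorder P] (A : Set P) : Set (Set P) :=
  {C | C ⊆ A ∧ IsChain (· ≤ ·) C ∧
    ∀ D : Set P, D ⊆ A → IsChain (· ≤ ·) D → C ⊆ D → C = D}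

/-- The rank-selected subposet `P_S = {x ∈ P : rk x ∈ S} ∪ {⊥, ⊤}`. -/
def rankSel {P : Type*} [Preorder P] [OrderBot P] [OrderTop P] (rk : P → ℕ)
    (S : Finset ℕ) : Set P :=
  {x | rk x ∈ S} ∪ {⊥, ⊤}

/-- `a_P(S)`: the number of maximal chains of the rank-selected subposet `P_S`. -/
def chainCount {P : Type*} [Preorder P] [OrderBot P] [OrderTop P] (rk : P → ℕ)
    (S : Finset ℕ) : ℕ :=
  Set.ncard (maxChainsIn (rankSel rk S))

/-- `b_P(S) = Σ_{T ⊆ S} (-1)^{|S-T|} a_P(T)`. -/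
def bDim {P : Type*} [Preorder P] [OrderBot P] [OrderTop P] (rk : P → ℕ)
    (S : Finset ℕ) : ℤ :=
  ∑ T ∈ S.powerset, (-1 : ℤ) ^ (S.card - T.card) * (chainCount rk T : ℤ)

/-- The character of the permutation representation `α_P(S)` of a group `G` acting (via
`act`) on the maximal chains of the rank-selected subposet `P_S`: its value at `g` is
the number of maximal chains of `P_S` fixed by `g`. -/
def gAlpha {P G : Type*} [Preorder P] [OrderBot P] [OrderTop P] (rk : P → ℕ)
    (act : G → P → P) (S : Finset ℕ) (g : G) : ℤ :=
  (Set.ncard {C : Set P | C ∈ maxChainsIn (rankSel rk S) ∧ act g '' C = C} : ℤ)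

/-- The character of the virtual representation
`β_P(S) = Σ_{T ⊆ S} (-1)^{|S-T|} α_P(T)`. -/
def gBeta {P G : Type*} [Preorder P] [OrderBot P] [OrderTop P] (rk : P → ℕ)
    (act : G → P → P) (S : Finset ℕ) (g : G) : ℤ :=
  ∑ T ∈ S.powerset, (-1 : ℤ) ^ (S.card - T.card) * gAlpha rk act T g

/-! ### The poset of injective words -/

/-- An injective word over the alphabet `{1,…,n}`. -/
def InjWord (n : ℕ) : Type := {l : List (Fin n) // l.Nodup}

instance (n : ℕ) : PartialOrder (InjWord n) where
  le u v := u.1.Sublist v.1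
  le_refl u := List.Sublist.refl _
  le_trans u v w h1 h2 := List.Sublist.trans h1 h2
  le_antisymm u v h1 h2 := Subtype.ext (List.Sublist.antisymm h1 h2)

instance (n : ℕ) : OrderBot (InjWord n) where
  bot := ⟨[], List.nodup_nil⟩
  bot_le u := List.nil_sublist u.1

/-- The rank function of the poset of injective words (with a maximum adjoined):
the rank of a word is its length, and the rank of `⊤` is `n+1`. -/
def rkInj (n : ℕ) (x : WithTop (InjWord n)) : ℕ :=
  WithTop.recTopCoe (n + 1) (fun u => u.1.length) x

/-- The action of `𝔖_n` on injective words, letter by letter. -/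
def permWord {n : ℕ} (w : Equiv.Perm (Fin n)) (u : InjWord n) : InjWord n :=
  ⟨u.1.map w, u.2.map w.injective⟩

/-- The character of `α_{P_n}(S)` for the `𝔖_n`-action on the poset of injective words. -/
def injAlpha (n : ℕ) (S : Finset ℕ) (g : Equiv.Perm (Fin n)) : ℤ :=
  gAlpha (rkInj n) (fun w : Equiv.Perm (Fin n) => WithTop.map (permWord w)) S g

/-- The character of `β_{P_n}(S)` for the `𝔖_n`-action on the poset of injective words. -/
def injBeta (n : ℕ) (S : Finset ℕ) (g : Equiv.Perm (Fin n)) : ℤ :=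
  gBeta (rkInj n) (fun w : Equiv.Perm (Fin n) => WithTop.map (permWord w)) S g

/-! ### The poset of r-colored injective words -/

/-- An `r`-colored injective word over `{1,…,n}`: a word in the alphabet
`{1,…,n} × ℤ_r` whose letters have pairwise distinct first coordinates. -/
def CInjWord (n r : ℕ) : Type := {l : List (Fin n × ZMod r) // (l.map Prod.fst).Nodup}

instance (n r : ℕ) : PartialOrder (CInjWord n r) where
  le u v := u.1.Sublist v.1
  le_refl u := List.Sublist.refl _
  le_trans u v w h1 h2 := List.Sublist.trans h1 h2
  le_antisymm u v h1 h2 := Subtype.ext (List.Sublist.antisymm h1 h2)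

instance (n r : ℕ) : OrderBot (CInjWord n r) where
  bot := ⟨[], by simp⟩
  bot_le u := List.nil_sublist u.1

/-- The rank function of the poset `P_{n,r}` of `r`-colored injective words
(with a maximum adjoined). -/
def rkC (n r : ℕ) (x : WithTop (CInjWord n r)) : ℕ :=
  WithTop.recTopCoe (n + 1) (fun u => u.1.length) x

/-- The action of `𝔖_n` on `r`-colored injective words: act on the first coordinate
of each letter, leaving colors unchanged. -/
def permCWord {n r : ℕ} (w : Equiv.Perm (Fin n)) (u : CInjWord n r) : CInjWord n r :=
  ⟨u.1.map (fun p => (w p.1, p.2)), by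
    have h := u.2.map w.injective
    rw [List.map_map] at h ⊢
    exact h⟩

/-- The character of `α_{P_{n,r}}(S)`. -/
def cAlpha (n r : ℕ) (S : Finset ℕ) (g : Equiv.Perm (Fin n)) : ℤ :=
  gAlpha (rkC n r) (fun w : Equiv.Perm (Fin n) => WithTop.map (permCWord w)) S g

/-- The character of `β_{P_{n,r}}(S)`. -/
def cBeta (n r : ℕ) (S : Finset ℕ) (g : Equiv.Perm (Fin n)) : ℤ :=
  gBeta (rkC n r) (fun w : Equiv.Perm (Fin n) => WithTop.map (permCWord w)) S g

/-- `b_{P_{n,r}}(S)`, the dimension of `β_{P_{n,r}}(S)`. -/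
def cChainDim (n r : ℕ) (S : Finset ℕ) : ℤ := bDim (rkC n r) S

/-! ### The statistics τ -/

/-- `τ(w,Q)` for a permutation `w` with descent set `S = {s_1 < ⋯ < s_k}` and a standard
Young tableau `Q`: the largest `i ∈ {0,…,k+1}` such that (a) `w(x) = w_S(x)` for
`x > s_{k+1-i}` and (b) no descent of `Q` is smaller than `n - s_{k+1-i}`. -/
def tau (n : ℕ) (S : Finset ℕ) (wS w : Equiv.Perm (Fin n)) {μ : YoungDiagram}
    (Q : SYT μ) : ℕ :=
  ((Finset.range (S.card + 2)).filter
    (fun i => (∀ x, sElt n S (S.card + 1 - i) < x → x ≤ n → permApp w x = permApp wS x) ∧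
      (∀ d ∈ Q.des, n - sElt n S (S.card + 1 - i) ≤ d))).max'
    ⟨0, by
      have hs := sElt_of_gt n S (S.card + 1 - 0) (by omega)
      refine Finset.mem_filter.2 ⟨Finset.mem_range.2 (by omega), ?_, ?_⟩
      · intro x hx hx'
        rw [hs] at hx
        exact absurd hx (not_lt.2 hx')
      · intro d _
        rw [hs]
        omega⟩

/-- The condition that all the numbers `1,…,t` appear in the first row of the `r`-colored
standard Young tableau `(Q, c)` and are colored with the zero color (the color of the
entry `k` being `c (k-1)`). -/
def zeroFirstRow {μ : YoungDiagram} {r : ℕ} (Q : SYT μ) (c : Fin μ.card → ZMod r)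
    (t : ℕ) : Prop :=
  ∀ k : Fin μ.card, (k : ℕ) < t →
    ((∃ j, (0, j) ∈ μ ∧ Q.entry 0 j = (k : ℕ) + 1) ∧ c k = 0)

/-- `τ(w,Q)` for an `r`-colored standard Young tableau `(Q,c)`. -/
def ctau (n : ℕ) {r : ℕ} (S : Finset ℕ) (wS w : Equiv.Perm (Fin n)) {μ : YoungDiagram}
    (Q : SYT μ) (c : Fin μ.card → ZMod r) : ℕ :=
  ((Finset.range (S.card + 2)).filter
    (fun i => (∀ x, sElt n S (S.card + 1 - i) < x → x ≤ n → permApp w x = permApp wS x) ∧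
      zeroFirstRow Q c (n - sElt n S (S.card + 1 - i)))).max'
    ⟨0, by
      have hs := sElt_of_gt n S (S.card + 1 - 0) (by omega)
      refine Finset.mem_filter.2 ⟨Finset.mem_range.2 (by omega), ?_, ?_⟩
      · intro x hx hx'
        rw [hs] at hx
        exact absurd hx (not_lt.2 hx')
      · rw [hs]
        intro k hk
        exact absurd hk (by omega)⟩

/-- The largest `i ∈ {0,…,n}` such that all the numbers `1,…,i` appear in the first row
of the `r`-colored standard Young tableau `(Q,c)` and are colored with the zero color. -/
def mQ (n : ℕ) {r : ℕ} {μ : YoungDiagram} (Q : SYT μ) (c : Fin μ.card → ZMod r) : ℕ :=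
  ((Finset.range (n + 1)).filter (fun i => zeroFirstRow Q c i)).max'
    ⟨0, Finset.mem_filter.2 ⟨Finset.mem_range.2 (by omega),
      fun k hk => absurd hk (by omega)⟩⟩

/-- The condition, for an `r`-colored permutation `(π, c)` (the color of the entry
`π(x)` in one-line notation being `c (x-1)`), that the entries `π(1),…,π(t)` are in
increasing order and all colored with the zero color. -/
def zeroIncreasing {n r : ℕ} (π : Equiv.Perm (Fin n)) (c : Fin n → ZMod r) (t : ℕ) : Prop :=
  (∀ x y, 1 ≤ x → x < y → y ≤ t → permApp π x < permApp π y) ∧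
  ∀ k : Fin n, (k : ℕ) < t → c k = 0

/-- `τ(w,u)` for an `r`-colored permutation `u = (π, c)`. -/
def tauU (n : ℕ) {r : ℕ} (S : Finset ℕ) (wS w : Equiv.Perm (Fin n))
    (π : Equiv.Perm (Fin n)) (c : Fin n → ZMod r) : ℕ :=
  ((Finset.range (S.card + 2)).filter
    (fun i => (∀ x, sElt n S (S.card + 1 - i) < x → x ≤ n → permApp w x = permApp wS x) ∧
      zeroIncreasing π c (n - sElt n S (S.card + 1 - i)))).max'
    ⟨0, by
      have hs := sElt_of_gt n S (S.card + 1 - 0) (by omega)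
      refine Finset.mem_filter.2 ⟨Finset.mem_range.2 (by omega), ?_, ?_, ?_⟩
      · intro x hx hx'
        rw [hs] at hx
        exact absurd hx (not_lt.2 hx')
      · intro x y hx hxy hy
        rw [hs] at hy
        exact absurd hy (by omega)
      · rw [hs]
        intro k hk
        exact absurd hk (by omega)⟩

/-- The largest `i ∈ {0,…,n}` such that the entries `π(1),…,π(i)` of the `r`-colored
permutation `(π,c)` are in increasing order and all colored with the zero color. -/
def mU (n : ℕ) {r : ℕ} (π : Equiv.Perm (Fin n)) (c : Fin n → ZMod r) : ℕ :=
  ((Finset.range (n + 1)).filter (fun i => zeroIncreasing π c i)).max'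
    ⟨0, Finset.mem_filter.2 ⟨Finset.mem_range.2 (by omega),
      fun x y hx hxy hy => absurd hy (by omega),
      fun k hk => absurd hk (by omega)⟩⟩

/-- `a_m(T)`: the number of chains in the Boolean lattice `B_m` whose elements have
set of ranks (cardinalities) equal to `T`. -/
def boolChains (m : ℕ) (T : Finset ℕ) : ℕ :=
  Nat.card {c : Finset (Finset (Fin m)) //
    IsChain (· ⊆ ·) (↑c : Set (Finset (Fin m))) ∧ c.image Finset.card = T}

end

/-!
A maximal chain of `P_{T ∪ {n}}` has the form `⊥ < x_{t₁} < ⋯ < x_{t_k} < x < ⊤` with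
`ρ x = n`, and since the action is good, `g` fixes the chain iff `g` fixes `x`. The interval
`[⊥, x]` is a Boolean lattice of rank `n`, so the chains through `x` are the flags of subsets of
`{1,…,n}` with sizes in `T`, which correspond to the permutations `w` with descent set in `T`
via `t ↦ w {1,…,t}`. Hence `α_P(T ∪ {n}) = #{w : Des w ⊆ T} · α_P({n})`. Finally
`β_P(S) + β_P(S ∪ {n}) = Σ_{T ⊆ S} (-1)^{|S-T|} α_P(T ∪ {n})`, and Möbius inversion on the
subsets of `S` turns `Σ_{T ⊆ S} (-1)^{|S-T|} #{w : Des w ⊆ T}` into `b_n(S)`.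
-/

section AlternatingSum

variable {α : Type*}

def altSum (f : Finset α → ℤ) (S : Finset α) : ℤ :=
  ∑ T ∈ S.powerset, (-1) ^ (S.card - T.card) * f T

lemma altSum_congr {f f' : Finset α → ℤ} {S : Finset α} (h : ∀ T ⊆ S, f T = f' T) :
    altSum f S = altSum f' S :=
  Finset.sum_congr rfl fun T hT => by rw [h T (Finset.mem_powerset.1 hT)]

lemma altSum_add (f f' : Finset α → ℤ) (S : Finset α) :
    altSum (fun T => f T + f' T) S = altSum f S + altSum f' S := by
  simp only [altSum, mul_add, Finset.sum_add_distrib]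

lemma altSum_mul_right (f : Finset α → ℤ) (c : ℤ) (S : Finset α) :
    altSum (fun T => f T * c) S = altSum f S * c := by
  simp only [altSum, Finset.sum_mul, mul_assoc]

lemma altSum_insert [DecidableEq α] {a : α} {S : Finset α} (ha : a ∉ S) (f : Finset α → ℤ) :
    altSum f (insert a S) = altSum (fun T => f (insert a T)) S - altSum f S := by
  rw [altSum, Finset.sum_powerset_insert ha, Finset.card_insert_of_notMem ha, add_comm,
    sub_eq_add_neg, altSum, altSum, ← Finset.sum_neg_distrib]
  congr 1 <;> refine Finset.sum_congr rfl fun T hT => ?_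
  · have haT : a ∉ T := fun h => ha (Finset.mem_powerset.1 hT h)
    rw [Finset.card_insert_of_notMem haT, Nat.add_sub_add_right]
  · have := Finset.card_le_card (Finset.mem_powerset.1 hT)
    rw [show S.card + 1 - T.card = S.card - T.card + 1 by omega, pow_succ]
    ring

lemma altSum_sum_powerset [DecidableEq α] (g : Finset α → ℤ) (S : Finset α) :
    altSum (fun T => ∑ U ∈ T.powerset, g U) S = g S := by
  induction S using Finset.induction_on generalizing g with
  | empty => simp [altSum]
  | insert a S ha ih =>
    have hsplit : ∀ T ⊆ S, ∑ U ∈ (insert a T).powerset, g U =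
        ∑ U ∈ T.powerset, g U + ∑ U ∈ T.powerset, g (insert a U) := fun T hT =>
      Finset.sum_powerset_insert (fun h => ha (hT h)) g
    rw [altSum_insert ha, altSum_congr hsplit, altSum_add, add_sub_cancel_left, ih]

end AlternatingSum

section Descents

variable {n : ℕ}

lemma mem_descentSet_iff_of_covBy {w : Equiv.Perm (Fin n)} {i j : Fin n} (h : i ⋖ j) :
    (j : ℕ) ∈ descentSet w ↔ w j < w i := by
  rw [Fin.covBy_iff, Nat.covBy_iff_add_one_eq] at h
  have hj := j.isLt
  have hi : (⟨(j : ℕ) - 1, by omega⟩ : Fin n) = i := Fin.ext (show (j : ℕ) - 1 = i by omega)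
  simp only [descentSet, permApp, Finset.mem_filter, Finset.mem_Icc, Nat.add_sub_cancel,
    dif_pos hj, dif_pos (show (j : ℕ) - 1 < n by omega), hi, Fin.eta]
  omega

lemma exists_covBy_of_mem_descentSet {w : Equiv.Perm (Fin n)} {d : ℕ} (hd : d ∈ descentSet w) :
    ∃ i j : Fin n, i ⋖ j ∧ (j : ℕ) = d := by
  have := Finset.mem_Icc.1 (Finset.mem_filter.1 hd).1
  refine ⟨⟨d - 1, by omega⟩, ⟨d, by omega⟩, ?_, rfl⟩
  rw [Fin.covBy_iff, Nat.covBy_iff_add_one_eq]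
  show d - 1 + 1 = d
  omega

lemma ncard_descentSet_subset (n : ℕ) (T : Finset ℕ) :
    {w : Equiv.Perm (Fin n) | descentSet w ⊆ T}.ncard = ∑ U ∈ T.powerset, numDescentSet n U := by
  rw [Set.ncard_eq_toFinset_card', Finset.card_eq_sum_card_fiberwise (f := descentSet)
    (t := T.powerset) (fun w hw => by simpa using hw)]
  refine Finset.sum_congr rfl fun U hU => ?_
  rw [numDescentSet, Nat.card_eq_fintype_card, Fintype.card_subtype]
  congr 1
  ext w
  simp only [Set.toFinset_ofPred, Finset.mem_filter, Finset.mem_univ, true_and]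
  exact ⟨And.right, fun h => ⟨h ▸ Finset.mem_powerset.1 hU, h⟩⟩

end Descents

section Flags

variable {n : ℕ}

/-- `w {1,…,t}`, the values of `w` at its first `t` positions. -/
def prefixSet (w : Equiv.Perm (Fin n)) (t : ℕ) : Finset (Fin n) :=
  Finset.univ.filter fun a => (w.symm a : ℕ) < t

lemma apply_mem_prefixSet {w : Equiv.Perm (Fin n)} {t : ℕ} {i : Fin n} :
    w i ∈ prefixSet w t ↔ (i : ℕ) < t := by
  simp [prefixSet]

lemma card_prefixSet (w : Equiv.Perm (Fin n)) {t : ℕ} (ht : t ≤ n) :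
    (prefixSet w t).card = t := by
  have : prefixSet w t = (Finset.univ.filter fun i : Fin n => (i : ℕ) < t).map w.toEmbedding := by
    ext a
    simp [prefixSet]
  rw [this, Finset.card_map, Fin.card_filter_val_lt, min_eq_right ht]

lemma prefixSet_mono (w : Equiv.Perm (Fin n)) : Monotone (prefixSet w) :=
  fun _ _ h _ ha => by
    simp only [prefixSet, Finset.mem_filter, Finset.mem_univ, true_and] at ha ⊢
    exact ha.trans_le h

lemma prefixSet_zero (w : Equiv.Perm (Fin n)) : prefixSet w 0 = ∅ := by
  simp [prefixSet]

lemma prefixSet_self (w : Equiv.Perm (Fin n)) : prefixSet w n = Finset.univ := by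
  simp [prefixSet]

/-- The first `t ∈ T ∪ {n}` with `a ∈ B t`, where `B n` is read as `univ`. -/
noncomputable def flagLevel (T : Finset ℕ) (B : ℕ → Finset (Fin n)) (a : Fin n) : ℕ :=
  sInf (insert n {t | t ∈ T ∧ a ∈ B t})

/-- Sorting `Fin n` by this key lists the blocks `B t \ B t'` of the flag one after the other,
each in increasing order: this is the permutation with descents in `T` realising the flag. -/
noncomputable def flagKey (T : Finset ℕ) (B : ℕ → Finset (Fin n)) (a : Fin n) : ℕ ×ₗ Fin n :=
  toLex (flagLevel T B a, a)

variable {T : Finset ℕ} {B : ℕ → Finset (Fin n)}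

lemma flagLevel_le_self (a : Fin n) : flagLevel T B a ≤ n :=
  Nat.sInf_le (Set.mem_insert _ _)

lemma flagLevel_le {a : Fin n} {t : ℕ} (ht : t ∈ T) (ha : a ∈ B t) : flagLevel T B a ≤ t :=
  Nat.sInf_le (Set.mem_insert_of_mem _ ⟨ht, ha⟩)

lemma flagLevel_eq_or_mem (a : Fin n) :
    flagLevel T B a = n ∨ (flagLevel T B a ∈ T ∧ a ∈ B (flagLevel T B a)) :=
  Nat.sInf_mem (Set.insert_nonempty _ _)

lemma flagKey_injective : Function.Injective (flagKey T B) :=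
  fun _ _ h => (Prod.mk.inj (toLex.injective h)).2

lemma flagKey_congr {B' : ℕ → Finset (Fin n)} (h : ∀ t ∈ T, B t = B' t) :
    flagKey T B = flagKey T B' := by
  funext a
  simp only [flagKey, flagLevel]
  congr 4
  exact Set.ext fun t => and_congr_right fun ht => by rw [h t ht]

end Flags

section PermutationsOfFlags

variable {n : ℕ} {T : Finset ℕ}

lemma eq_sort_flagKey_prefixSet {w : Equiv.Perm (Fin n)} (hw : descentSet w ⊆ T) :
    w = Tuple.sort (flagKey T (prefixSet w)) := by
  set L : Fin n → ℕ := fun i => flagLevel T (prefixSet w) (w i) with hL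
  have hL_le : ∀ i : Fin n, ∀ t ∈ T, (i : ℕ) < t → L i ≤ t := fun i t ht hit =>
    flagLevel_le ht (apply_mem_prefixSet.2 hit)
  have hL_gt : ∀ i : Fin n, (i : ℕ) < L i := fun i => by
    rcases flagLevel_eq_or_mem (T := T) (B := prefixSet w) (w i) with h | h
    · simp only [hL, h, i.isLt]
    · exact apply_mem_prefixSet.1 h.2
  rw [Tuple.eq_sort_iff]
  refine ⟨(monotone_iff_forall_covBy _).2 fun i j hij => ?_,
    fun i j hij h => absurd (w.injective (flagKey_injective h)) hij.ne⟩
  have hij' := Nat.covBy_iff_add_one_eq.1 (Fin.covBy_iff.1 hij)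
  simp only [Function.comp_apply, flagKey, Prod.Lex.toLex_le_toLex]
  have hLij : L i ≤ L j := by
    rcases flagLevel_eq_or_mem (T := T) (B := prefixSet w) (w j) with h | h
    · simp only [hL, h, flagLevel_le_self]
    · exact hL_le i _ h.1 (by have := hL_gt j; omega)
  rcases hLij.lt_or_eq with h | h
  · exact Or.inl h
  -- `i` and `j` lie in the same block, so `j ∉ T` and `j` is not a descent
  refine Or.inr ⟨h, le_of_not_gt fun hdes => ?_⟩
  have := hL_le i j (hw ((mem_descentSet_iff_of_covBy hij).2 hdes)) (by omega)
  have := hL_gt j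
  omega

lemma eq_of_prefixSet_eq {w w' : Equiv.Perm (Fin n)} (hw : descentSet w ⊆ T)
    (hw' : descentSet w' ⊆ T) (h : ∀ t ∈ T, prefixSet w t = prefixSet w' t) : w = w' := by
  rw [eq_sort_flagKey_prefixSet hw, eq_sort_flagKey_prefixSet hw', flagKey_congr h]

variable {B : ℕ → Finset (Fin n)} (hB : ∀ t ∈ T, (B t).card = t)
  (hmono : ∀ t ∈ T, ∀ t' ∈ T, t ≤ t' → B t ⊆ B t')
include hB hmono

lemma mem_iff_flagLevel_le {a : Fin n} {t : ℕ} (ht : t ∈ T) :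
    a ∈ B t ↔ flagLevel T B a ≤ t := by
  refine ⟨flagLevel_le ht, fun hle => ?_⟩
  rcases flagLevel_eq_or_mem (T := T) (B := B) a with h | h
  · have htn : t ≤ n := by simpa [hB t ht] using (B t).card_le_univ
    have : B t = Finset.univ :=
      Finset.eq_univ_of_card _ (by rw [hB t ht, Fintype.card_fin]; omega)
    simp [this]
  · exact hmono _ h.1 t ht hle h.2

lemma prefixSet_sort_flagKey {t : ℕ} (ht : t ∈ T) :
    prefixSet (Tuple.sort (flagKey T B)) t = B t := by
  set w := Tuple.sort (flagKey T B)
  have htn : t ≤ n := by simpa [hB t ht] using (B t).card_le_univ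
  have hcard : (prefixSet w t).card = (B t).card := by rw [card_prefixSet w htn, hB t ht]
  by_contra hne
  obtain ⟨a, haB, ha⟩ :=
    Finset.not_subset.1 fun h => hne (Finset.eq_of_subset_of_card_le h hcard.le).symm
  obtain ⟨b, hb, hbB⟩ :=
    Finset.not_subset.1 fun h => hne (Finset.eq_of_subset_of_card_le h hcard.ge)
  rw [← w.apply_symm_apply a, apply_mem_prefixSet] at ha
  rw [← w.apply_symm_apply b, apply_mem_prefixSet] at hb
  have hkey : flagKey T B (w (w.symm b)) ≤ flagKey T B (w (w.symm a)) :=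
    Tuple.monotone_sort (flagKey T B) (show w.symm b ≤ w.symm a by rw [Fin.le_def]; omega)
  simp only [Equiv.apply_symm_apply, flagKey, Prod.Lex.toLex_le_toLex] at hkey
  have := (mem_iff_flagLevel_le hB hmono ht).1 haB
  have := (mem_iff_flagLevel_le hB hmono ht).not.1 hbB
  omega

lemma descentSet_sort_flagKey_subset : descentSet (Tuple.sort (flagKey T B)) ⊆ T := by
  set w := Tuple.sort (flagKey T B)
  intro d hd
  obtain ⟨i, j, hij, rfl⟩ := exists_covBy_of_mem_descentSet hd
  have hdes := (mem_descentSet_iff_of_covBy hij).1 hd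
  have hij' := Nat.covBy_iff_add_one_eq.1 (Fin.covBy_iff.1 hij)
  have hkey := Tuple.monotone_sort (flagKey T B) hij.le
  simp only [Function.comp_apply, flagKey, Prod.Lex.toLex_le_toLex] at hkey
  have hlt : flagLevel T B (w i) < flagLevel T B (w j) :=
    hkey.resolve_right fun h => not_le.2 hdes h.2
  obtain ⟨hL, hwi⟩ := (flagLevel_eq_or_mem (T := T) (B := B) (w i)).resolve_left
    fun h => by have := flagLevel_le_self (T := T) (B := B) (w j); omega
  have hwj : w j ∉ B (flagLevel T B (w i)) := fun h => by
    have := (mem_iff_flagLevel_le hB hmono hL).1 h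
    omega
  rw [← prefixSet_sort_flagKey hB hmono hL, apply_mem_prefixSet] at hwi hwj
  convert hL using 1
  omega

lemma exists_prefixSet_eq :
    ∃ w : Equiv.Perm (Fin n), descentSet w ⊆ T ∧ ∀ t ∈ T, prefixSet w t = B t :=
  ⟨_, descentSet_sort_flagKey_subset hB hmono, fun _ ht => prefixSet_sort_flagKey hB hmono ht⟩

end PermutationsOfFlags

lemma ncard_descentSet_subset_empty (n : ℕ) :
    {w : Equiv.Perm (Fin n) | descentSet w ⊆ ∅}.ncard = 1 := by
  have h1 : descentSet (1 : Equiv.Perm (Fin n)) ⊆ ∅ := fun d hd => by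
    obtain ⟨i, j, hij, rfl⟩ := exists_covBy_of_mem_descentSet hd
    exact absurd ((mem_descentSet_iff_of_covBy hij).1 hd) (not_lt.2 hij.le)
  exact Set.ncard_eq_one.2
    ⟨1, Set.eq_singleton_iff_unique_mem.2 ⟨h1, fun w hw => eq_of_prefixSet_eq hw h1 (by simp)⟩⟩

section GradedPoset

variable {P : Type*} [PartialOrder P] {ρ : P → ℕ}

lemma strictMono_of_covBy [Finite P] (hρcov : ∀ a b : P, a ⋖ b → ρ b = ρ a + 1) :
    StrictMono ρ := by
  intro x y hxy
  induction y using WellFoundedLT.induction with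
  | _ y ih =>
    obtain ⟨z, hxz, hzy⟩ := exists_le_covBy_of_lt hxy
    rw [hρcov z y hzy]
    rcases hxz.eq_or_lt with rfl | h
    · omega
    · have := ih z hzy.lt h
      omega

lemma exists_rank_eq_of_lt [Finite P] (hρcov : ∀ a b : P, a ⋖ b → ρ b = ρ a + 1) {x y : P}
    (hxy : x < y) {t : ℕ} (hxt : ρ x < t) (hty : t ≤ ρ y) : ∃ z, x < z ∧ z ≤ y ∧ ρ z = t := by
  induction y using WellFoundedLT.induction with
  | _ y ih =>
    rcases hty.eq_or_lt with rfl | hty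
    · exact ⟨y, hxy, le_rfl, rfl⟩
    obtain ⟨z, hxz, hzy⟩ := exists_le_covBy_of_lt hxy
    have hρz := hρcov z y hzy
    have hxz : x < z := lt_of_le_of_ne hxz fun h => by subst h; omega
    obtain ⟨z', hxz', hz'z, rfl⟩ := ih z hzy.lt hxz (by omega)
    exact ⟨z', hxz', hz'z.trans hzy.le, rfl⟩

lemma IsChain.le_of_rank_le (hρ : StrictMono ρ) {C : Set P} (hC : IsChain (· ≤ ·) C) {c d : P}
    (hc : c ∈ C) (hd : d ∈ C) (h : ρ c ≤ ρ d) : c ≤ d := by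
  rcases eq_or_ne c d with rfl | hne
  · exact le_rfl
  exact (hC hc hd hne).resolve_right fun hdc => (hρ (lt_of_le_of_ne hdc hne.symm)).not_ge h

lemma IsChain.eq_of_rank_eq (hρ : StrictMono ρ) {C : Set P} (hC : IsChain (· ≤ ·) C) {c d : P}
    (hc : c ∈ C) (hd : d ∈ C) (h : ρ c = ρ d) : c = d :=
  (hC.le_of_rank_le hρ hc hd h.le).antisymm (hC.le_of_rank_le hρ hd hc h.ge)

lemma IsChain.exists_insert_rank [Finite P] (hρcov : ∀ a b : P, a ⋖ b → ρ b = ρ a + 1)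
    {C : Set P} (hC : IsChain (· ≤ ·) C) {a b : P} (ha : a ∈ C) (hb : b ∈ C) {t : ℕ}
    (hat : ρ a < t) (htb : t ≤ ρ b) : ∃ z, ρ z = t ∧ IsChain (· ≤ ·) (insert z C) := by
  have hρ := strictMono_of_covBy hρcov
  obtain ⟨a', ⟨ha'C, ha't⟩, ha'max⟩ :=
    Set.exists_max_image {c | c ∈ C ∧ ρ c < t} ρ (Set.toFinite _) ⟨a, ha, hat⟩
  obtain ⟨b', ⟨hb'C, hb't⟩, hb'min⟩ :=
    Set.exists_min_image {c | c ∈ C ∧ t ≤ ρ c} ρ (Set.toFinite _) ⟨b, hb, htb⟩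
  have ha'b' : a' < b' :=
    lt_of_le_of_ne (hC.le_of_rank_le hρ ha'C hb'C (by omega)) fun h => by subst h; omega
  obtain ⟨z, ha'z, hzb', rfl⟩ := exists_rank_eq_of_lt hρcov ha'b' ha't hb't
  refine ⟨z, rfl, hC.insert fun c hc _ => ?_⟩
  rcases lt_or_ge (ρ c) (ρ z) with h | h
  · exact Or.inr ((hC.le_of_rank_le hρ hc ha'C (ha'max c ⟨hc, h⟩)).trans ha'z.le)
  · exact Or.inl (hzb'.trans (hC.le_of_rank_le hρ hb'C hc (hb'min c ⟨hc, h⟩)))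

lemma rank_apply_of_ordConnected (hρcov : ∀ a b : P, a ⋖ b → ρ b = ρ a + 1) {Q : Type*}
    [PartialOrder Q] [OrderBot Q] [Finite Q] {r : Q → ℕ} (hr : ∀ a b : Q, a ⋖ b → r b = r a + 1)
    (hr0 : r ⊥ = 0) (f : Q ↪o P) (hf : (Set.range f).OrdConnected) (hf0 : ρ (f ⊥) = 0) (q : Q) :
    ρ (f q) = r q := by
  induction q using WellFoundedLT.induction with
  | _ q ih =>
    rcases eq_bot_or_bot_lt q with rfl | hq
    · rw [hf0, hr0]
    obtain ⟨z, -, hzq⟩ := exists_le_covBy_of_lt hq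
    rw [hρcov _ _ ((hf.apply_covBy_apply_iff f).2 hzq), hr z q hzq, ih z hzq.lt]

end GradedPoset

section RankSelection

variable {P : Type*} [PartialOrder P] [BoundedOrder P] {ρ : P → ℕ} {U : Finset ℕ}

lemma eq_bot_of_rank_eq_zero (hρ : StrictMono ρ) (hρbot : ρ ⊥ = 0) {x : P} (hx : ρ x = 0) :
    x = ⊥ :=
  (eq_bot_or_bot_lt x).resolve_right fun h => by have := hρ h; omega

lemma mem_maxChainsIn_rankSel (hρ : StrictMono ρ) {C : Set P} (hCA : C ⊆ rankSel ρ U)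
    (hC : IsChain (· ≤ ·) C) (hbot : ⊥ ∈ C) (htop : ⊤ ∈ C) (hranks : ∀ t ∈ U, ∃ x ∈ C, ρ x = t) :
    C ∈ maxChainsIn (rankSel ρ U) := by
  refine ⟨hCA, hC, fun D hDA hD hCD => hCD.antisymm fun d hd => ?_⟩
  rcases hDA hd with hdU | rfl | rfl
  · obtain ⟨c, hc, hcd⟩ := hranks _ hdU
    exact hD.eq_of_rank_eq hρ (hCD hc) hd hcd ▸ hc
  · exact hbot
  · exact htop

lemma mem_maxChainsIn_rankSel_iff [Finite P] (hρcov : ∀ a b : P, a ⋖ b → ρ b = ρ a + 1)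
    (hρbot : ρ ⊥ = 0) (hU : ∀ t ∈ U, t < ρ ⊤) {C : Set P} :
    C ∈ maxChainsIn (rankSel ρ U) ↔ C ⊆ rankSel ρ U ∧ IsChain (· ≤ ·) C ∧ ⊥ ∈ C ∧ ⊤ ∈ C ∧
      ∀ t ∈ U, ∃ x ∈ C, ρ x = t := by
  refine ⟨fun ⟨hCA, hC, hmax⟩ => ?_, fun ⟨hCA, hC, hbot, htop, hranks⟩ =>
    mem_maxChainsIn_rankSel (strictMono_of_covBy hρcov) hCA hC hbot htop hranks⟩
  have hins : ∀ z ∈ rankSel ρ U, IsChain (· ≤ ·) (insert z C) → z ∈ C := fun z hz hzC =>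
    (hmax _ (Set.insert_subset hz hCA) hzC (Set.subset_insert _ _)) ▸ Set.mem_insert _ _
  have hbot : ⊥ ∈ C := hins ⊥ (Or.inr (Or.inl rfl)) (hC.insert fun _ _ _ => Or.inl bot_le)
  have htop : ⊤ ∈ C := hins ⊤ (Or.inr (Or.inr rfl)) (hC.insert fun _ _ _ => Or.inr le_top)
  refine ⟨hCA, hC, hbot, htop, fun t ht => ?_⟩
  by_contra! hno
  rcases Nat.eq_zero_or_pos t with rfl | htpos
  · exact hno ⊥ hbot hρbot
  obtain ⟨z, rfl, hz⟩ := hC.exists_insert_rank hρcov hbot htop (by omega) (hU _ ht).le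
  exact hno z (hins z (Or.inl ht) hz) rfl

end RankSelection

section Simplicial

variable {P : Type*} [PartialOrder P] [OrderBot P] {ρ : P → ℕ}

lemma exists_orderEmbedding_range_eq_Iic (hρcov : ∀ a b : P, a ⋖ b → ρ b = ρ a + 1)
    (hρbot : ρ ⊥ = 0) {x : P} {n m : ℕ} (hx : ρ x = n) (e : Set.Iic x ≃o Finset (Fin m)) :
    ∃ f : Finset (Fin n) ↪o P, Set.range f = Set.Iic x ∧ ∀ s, ρ (f s) = s.card := by
  let f : Finset (Fin m) ↪o P := e.symm.toOrderEmbedding.trans (OrderEmbedding.subtype _)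
  have hrange : Set.range f = Set.Iic x := by
    change Set.range (Subtype.val ∘ e.symm) = _
    rw [Set.range_comp, e.symm.surjective.range_eq, Set.image_univ, Subtype.range_coe]
  have hrank : ∀ s, ρ (f s) = s.card :=
    rank_apply_of_ordConnected hρcov (fun _ _ h => (Nat.covBy_iff_add_one_eq.1 h.card_finset).symm)
      Finset.card_empty f (hrange ▸ Set.ordConnected_Iic) (by
        change ρ (e.symm ⊥ : P) = 0
        rw [OrderIso.map_bot, Set.Iic.coe_bot, hρbot])
  have hm : n = m := by
    have hfx : f ⊤ = x := congrArg Subtype.val e.symm.map_top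
    rw [← hx, ← hfx, hrank, Finset.top_eq_univ, Finset.card_univ, Fintype.card_fin]
  subst hm
  exact ⟨f, hrange, hrank⟩

end Simplicial

lemma apply_univ_of_range_eq_Iic {P : Type*} [PartialOrder P] {n : ℕ} {f : Finset (Fin n) ↪o P}
    {x : P} (hf : Set.range f = Set.Iic x) : f Finset.univ = x := by
  obtain ⟨s, hs⟩ : x ∈ Set.range f := hf ▸ Set.self_mem_Iic
  exact le_antisymm (show f Finset.univ ∈ Set.Iic x from hf ▸ Set.mem_range_self _)
    (hs ▸ f.monotone (Finset.subset_univ s))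

section FlagChains

variable {P : Type*} [PartialOrder P] [BoundedOrder P] {ρ : P → ℕ} {n : ℕ}

def flagChain (f : Finset (Fin n) → P) (w : Equiv.Perm (Fin n)) (U : Finset ℕ) : Set P :=
  insert ⊤ ((fun t => f (prefixSet w t)) '' ↑(insert 0 U))

variable {f : Finset (Fin n) ↪o P} (hfρ : ∀ s, ρ (f s) = s.card)
include hfρ

lemma apply_prefixSet_zero (hρ : StrictMono ρ) (hρbot : ρ ⊥ = 0) (w : Equiv.Perm (Fin n)) :
    f (prefixSet w 0) = ⊥ :=
  eq_bot_of_rank_eq_zero hρ hρbot (by rw [hfρ, prefixSet_zero, Finset.card_empty])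

lemma flagChain_mem_maxChainsIn (hρ : StrictMono ρ) (hρbot : ρ ⊥ = 0) (w : Equiv.Perm (Fin n))
    {U : Finset ℕ} (hU : ∀ t ∈ U, t ≤ n) : flagChain f w U ∈ maxChainsIn (rankSel ρ U) := by
  have hf0 := apply_prefixSet_zero hfρ hρ hρbot w
  have hrank : ∀ t ∈ U, ρ (f (prefixSet w t)) = t := fun t ht => by
    rw [hfρ, card_prefixSet w (hU t ht)]
  refine mem_maxChainsIn_rankSel hρ ?_ ?_ (Set.mem_insert_of_mem _ ⟨0, by simp, hf0⟩)
    (Set.mem_insert _ _) fun t ht => ⟨_, Set.mem_insert_of_mem _ ⟨t, by simp [ht], rfl⟩, hrank t ht⟩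
  · rintro _ (rfl | ⟨t, ht, rfl⟩)
    · exact Or.inr (Or.inr rfl)
    rcases Finset.mem_insert.1 ht with rfl | ht
    · exact Or.inr (Or.inl hf0)
    · exact Or.inl (show ρ _ ∈ U by rw [hrank t ht]; exact ht)
  · refine IsChain.insert ?_ fun _ _ _ => Or.inr le_top
    exact (f.monotone.comp (prefixSet_mono w)).isChain_image (isChain_of_trichotomous _)

lemma prefixSet_eq_of_flagChain_eq (hn : n < ρ ⊤) {U : Finset ℕ} (hU : ∀ t ∈ U, t ≤ n)
    {w w' : Equiv.Perm (Fin n)} (h : flagChain f w U = flagChain f w' U) {t : ℕ} (ht : t ∈ U) :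
    prefixSet w t = prefixSet w' t := by
  have hrank : ∀ w : Equiv.Perm (Fin n), ∀ t ∈ insert 0 U, ρ (f (prefixSet w t)) = t :=
    fun w t ht => by
      rw [hfρ, card_prefixSet w]
      rcases Finset.mem_insert.1 ht with rfl | ht
      exacts [Nat.zero_le n, hU t ht]
  have ht0 : t ∈ insert 0 U := Finset.mem_insert_of_mem ht
  have hmem : f (prefixSet w t) ∈ flagChain f w' U := h ▸ Set.mem_insert_of_mem _ ⟨t, ht0, rfl⟩
  rcases hmem with htop | ⟨t', ht', heq⟩
  · have := hrank w t ht0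
    rw [htop] at this
    have := hU t ht
    omega
  · beta_reduce at heq
    have htt' : t' = t := by rw [← hrank w' t' ht', heq, hrank w t ht0]
    subst htt'
    exact f.injective heq.symm

lemma exists_flagChain_eq [Finite P] (hρcov : ∀ a b : P, a ⋖ b → ρ b = ρ a + 1)
    (hρbot : ρ ⊥ = 0) (hn : n < ρ ⊤) {x : P} (hf : Set.range f = Set.Iic x) {T : Finset ℕ}
    (hT : ∀ t ∈ T, t ≤ n) {C : Set P} (hCmax : C ∈ maxChainsIn (rankSel ρ (insert n T)))
    (hxC : x ∈ C) :
    ∃ w : Equiv.Perm (Fin n), descentSet w ⊆ T ∧ flagChain f w (insert n T) = C := by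
  have hρ := strictMono_of_covBy hρcov
  have hU : ∀ t ∈ insert n T, t ≤ n := by simpa using hT
  have hfx := apply_univ_of_range_eq_Iic hf
  obtain ⟨hCA, hC, hbot, htop, hranks⟩ :=
    (mem_maxChainsIn_rankSel_iff hρcov hρbot fun t ht => (hU t ht).trans_lt hn).1 hCmax
  have hB : ∀ t, ∃ s : Finset (Fin n), t ∈ T → f s ∈ C ∧ s.card = t := by
    intro t
    by_cases ht : t ∈ T
    · obtain ⟨c, hc, rfl⟩ := hranks t (Finset.mem_insert_of_mem ht)
      obtain ⟨s, rfl⟩ : c ∈ Set.range f := hf ▸ hC.le_of_rank_le hρ hc hxC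
        (by rw [← hfx, hfρ, Finset.card_univ, Fintype.card_fin]; exact hT _ ht)
      exact ⟨s, fun _ => ⟨hc, (hfρ s).symm⟩⟩
    · exact ⟨∅, fun h => absurd h ht⟩
  choose B hB using hB
  obtain ⟨w, hw, hwB⟩ := exists_prefixSet_eq (fun t ht => (hB t ht).2)
    fun t ht t' ht' htt' => f.le_iff_le.1 (hC.le_of_rank_le hρ (hB t ht).1 (hB t' ht').1
      (by rw [hfρ, hfρ, (hB t ht).2, (hB t' ht').2]; exact htt'))
  -- `C` is a chain containing the maximal chain `flagChain f w _`, so the two coincide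
  refine ⟨w, hw, (flagChain_mem_maxChainsIn hfρ hρ hρbot w hU).2.2 C hCA hC ?_⟩
  rintro _ (rfl | ⟨t, ht, rfl⟩)
  · exact htop
  beta_reduce
  rcases Finset.mem_insert.1 ht with rfl | ht
  · rwa [apply_prefixSet_zero hfρ hρ hρbot]
  rcases Finset.mem_insert.1 ht with rfl | ht
  · rwa [prefixSet_self, hfx]
  · rw [hwB t ht]
    exact (hB t ht).1

lemma ncard_maxChainsIn_rankSel_containing [Finite P] (hρcov : ∀ a b : P, a ⋖ b → ρ b = ρ a + 1)
    (hρbot : ρ ⊥ = 0) (hn : n < ρ ⊤) {x : P} (hf : Set.range f = Set.Iic x) {T : Finset ℕ}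
    (hT : ∀ t ∈ T, t ≤ n) :
    {C | C ∈ maxChainsIn (rankSel ρ (insert n T)) ∧ x ∈ C}.ncard =
      {w : Equiv.Perm (Fin n) | descentSet w ⊆ T}.ncard := by
  have hU : ∀ t ∈ insert n T, t ≤ n := by simpa using hT
  have hbij : Set.BijOn (fun w => flagChain f w (insert n T)) {w | descentSet w ⊆ T}
      {C | C ∈ maxChainsIn (rankSel ρ (insert n T)) ∧ x ∈ C} :=
    ⟨fun w _ => ⟨flagChain_mem_maxChainsIn hfρ (strictMono_of_covBy hρcov) hρbot w hU,
        Set.mem_insert_of_mem _ ⟨n, by simp, show f _ = x by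
          rw [prefixSet_self, apply_univ_of_range_eq_Iic hf]⟩⟩,
      fun w hw w' hw' h => eq_of_prefixSet_eq hw hw' fun t ht =>
        prefixSet_eq_of_flagChain_eq hfρ hn hU h (Finset.mem_insert_of_mem ht),
      fun C ⟨hCmax, hxC⟩ => exists_flagChain_eq hfρ hρcov hρbot hn hf hT hCmax hxC⟩
  rw [← hbij.image_eq, hbij.injOn.ncard_image]

end FlagChains

section GoodAction

variable {P : Type*} [PartialOrder P] [BoundedOrder P] {G : Type*} [Group G] [MulAction G P]
  {ρ : P → ℕ} {n : ℕ} {U : Finset ℕ}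

def smulOrderIso (hact : ∀ (g : G) (x y : P), x ≤ y ↔ g • x ≤ g • y) (g : G) : P ≃o P :=
  { MulAction.toPerm g with map_rel_iff' := (hact g _ _).symm }

lemma fixed_maxChainsIn_eq_biUnion [Finite P] (hact : ∀ (g : G) (x y : P), x ≤ y ↔ g • x ≤ g • y)
    (hgood : ∀ (g : G) (y : P), y ≠ ⊤ → g • y = y → ∀ x : P, x ≤ y → g • x = x)
    (hρbot : ρ ⊥ = 0) (hρtop : ρ ⊤ = n + 1) (hρcov : ∀ a b : P, a ⋖ b → ρ b = ρ a + 1)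
    (hnU : n ∈ U) (hU : ∀ t ∈ U, t ≤ n) (g : G) :
    {C | C ∈ maxChainsIn (rankSel ρ U) ∧ (fun x => g • x) '' C = C} =
      ⋃ x ∈ {x | ρ x = n ∧ g • x = x}, {C | C ∈ maxChainsIn (rankSel ρ U) ∧ x ∈ C} := by
  have hρ := strictMono_of_covBy hρcov
  ext C
  simp only [Set.mem_ofPred_eq, Set.mem_iUnion, exists_prop]
  constructor
  · rintro ⟨hCmax, hCfix⟩
    obtain ⟨-, hC, -, -, hranks⟩ :=
      (mem_maxChainsIn_rankSel_iff hρcov hρbot fun t ht => by have := hU t ht; omega).1 hCmax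
    obtain ⟨x, hxC, hx⟩ := hranks n hnU
    have hgxC : g • x ∈ C := hCfix ▸ Set.mem_image_of_mem _ hxC
    have hgx : ρ (g • x) = ρ x :=
      rank_apply_of_ordConnected hρcov hρcov hρbot (smulOrderIso hact g).toOrderEmbedding
        (by simp [Set.ordConnected_univ]) (by simp [hρbot]) x
    exact ⟨x, ⟨hx, hC.eq_of_rank_eq hρ hgxC hxC hgx⟩, hCmax, hxC⟩
  · rintro ⟨x, ⟨hx, hgx⟩, hCmax, hxC⟩
    refine ⟨hCmax, (Set.image_congr fun c hc => ?_).trans (Set.image_id' C)⟩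
    by_cases hctop : c = ⊤
    · exact hctop ▸ (smulOrderIso hact g).map_top
    have hcn : ρ c ≤ n := by
      rcases hCmax.1 hc with hcU | rfl | rfl
      exacts [hU _ hcU, hρbot ▸ Nat.zero_le n, absurd rfl hctop]
    exact hgood g x (fun h => by rw [h] at hx; omega) hgx c
      (hCmax.2.1.le_of_rank_le hρ hc hxC (hx ▸ hcn))

lemma gAlpha_insert [Finite P] (hact : ∀ (g : G) (x y : P), x ≤ y ↔ g • x ≤ g • y)
    (hgood : ∀ (g : G) (y : P), y ≠ ⊤ → g • y = y → ∀ x : P, x ≤ y → g • x = x)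
    (hρbot : ρ ⊥ = 0) (hρtop : ρ ⊤ = n + 1) (hρcov : ∀ a b : P, a ⋖ b → ρ b = ρ a + 1)
    (hsimp : ∀ x : P, x ≠ ⊤ → ∃ m : ℕ, Nonempty (Set.Iic x ≃o Finset (Fin m)))
    {T : Finset ℕ} (hT : ∀ t ∈ T, t ≤ n) (g : G) :
    gAlpha ρ (fun g x => g • x) (insert n T) g =
      {w : Equiv.Perm (Fin n) | descentSet w ⊆ T}.ncard * {x : P | ρ x = n ∧ g • x = x}.ncard := by
  have hρ := strictMono_of_covBy hρcov
  have hthrough : ∀ x ∈ {x : P | ρ x = n ∧ g • x = x},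
      {C | C ∈ maxChainsIn (rankSel ρ (insert n T)) ∧ x ∈ C}.ncard =
        {w : Equiv.Perm (Fin n) | descentSet w ⊆ T}.ncard := by
    rintro x ⟨hx, -⟩
    obtain ⟨m, ⟨e⟩⟩ := hsimp x fun h => by rw [h] at hx; omega
    obtain ⟨f, hf, hfρ⟩ := exists_orderEmbedding_range_eq_Iic hρcov hρbot hx e
    exact ncard_maxChainsIn_rankSel_containing hfρ hρcov hρbot (by omega) hf hT
  have hdisj : {x : P | ρ x = n ∧ g • x = x}.PairwiseDisjoint
      fun x => {C | C ∈ maxChainsIn (rankSel ρ (insert n T)) ∧ x ∈ C} :=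
    fun x hx y hy hxy => Set.disjoint_left.2 fun C ⟨hC, hxC⟩ ⟨_, hyC⟩ =>
      hxy (hC.2.1.eq_of_rank_eq hρ hxC hyC (hx.1.trans hy.1.symm))
  rw [gAlpha, fixed_maxChainsIn_eq_biUnion hact hgood hρbot hρtop hρcov (Finset.mem_insert_self n T)
      (by simpa using hT) g, (Set.toFinite _).ncard_biUnion (fun _ _ => Set.toFinite _) hdisj,
    finsum_mem_congr rfl hthrough, ← finsum_one (s := {x : P | ρ x = n ∧ g • x = x}),
    ← Nat.cast_mul, mul_comm, finsum_mem_mul, one_mul]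

end GoodAction

/-- **Theorem 3.1, Eq. (7)**: for a good action of a group `G` on a finite graded poset
`P` of rank `n+1` such that `P ∖ {⊤}` is simplicial,
`β_P(S) + β_P(S ∪ {n}) = b_n(S) · α_P({n})` for all `S ⊆ {1,…,n-1}`. -/
theorem statement4 {P : Type*} [Fintype P] [PartialOrder P] [BoundedOrder P]
    {G : Type*} [Group G] [MulAction G P]
    (hact : ∀ (g : G) (x y : P), x ≤ y ↔ g • x ≤ g • y)
    (hgood : ∀ (g : G) (y : P), y ≠ ⊤ → g • y = y → ∀ x : P, x ≤ y → g • x = x)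
    (n : ℕ) (ρ : P → ℕ) (hρbot : ρ ⊥ = 0) (hρtop : ρ ⊤ = n + 1)
    (hρcov : ∀ a b : P, a ⋖ b → ρ b = ρ a + 1)
    (hsimp : ∀ x : P, x ≠ ⊤ → ∃ m : ℕ, Nonempty (Set.Iic x ≃o Finset (Fin m)))
    (S : Finset ℕ) (hS : S ⊆ Finset.Icc 1 (n - 1)) :
    ∀ g : G, gBeta ρ (fun g x => g • x) S g + gBeta ρ (fun g x => g • x) (insert n S) g =
      (numDescentSet n S : ℤ) * gAlpha ρ (fun g x => g • x) {n} g := by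
  intro g
  have hnS : n ∉ S := fun h => by have := Finset.mem_Icc.1 (hS h); omega
  have hα : ∀ T ⊆ S, gAlpha ρ (fun g x => g • x) (insert n T) g =
      {w : Equiv.Perm (Fin n) | descentSet w ⊆ T}.ncard * {x : P | ρ x = n ∧ g • x = x}.ncard :=
    fun T hT => gAlpha_insert hact hgood hρbot hρtop hρcov hsimp
      (fun t ht => by have := Finset.mem_Icc.1 (hS (hT ht)); omega) g
  set X : ℤ := ({x : P | ρ x = n ∧ g • x = x}.ncard : ℤ)
  calc gBeta ρ (fun g x => g • x) S g + gBeta ρ (fun g x => g • x) (insert n S) g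
      = altSum (fun T => gAlpha ρ (fun g x => g • x) (insert n T) g) S := by
        rw [gBeta, gBeta, ← altSum, ← altSum, altSum_insert hnS, add_sub_cancel]
    _ = altSum (fun T => (∑ U ∈ T.powerset, (numDescentSet n U : ℤ)) * X) S :=
        altSum_congr fun T hT => by rw [hα T hT, ncard_descentSet_subset]; push_cast; rfl
    _ = numDescentSet n S * X := by rw [altSum_mul_right, altSum_sum_powerset]
    _ = numDescentSet n S * gAlpha ρ (fun g x => g • x) {n} g := by
        rw [← insert_empty_eq, hα ∅ (Finset.empty_subset S), ncard_descentSet_subset_empty,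
          Nat.cast_one, one_mul]
end

section
/- Let P = P_{n,r} be the poset of r-colored injective words with the natural 𝔖_n-action. Then for every S ⊆ {1,…,n−1}, β_P(S) + β_P(S ∪ {n}) = b_n(S) · r^n · ρ^reg, where ρ^reg is the regular representation of 𝔖_n and b_n(S) is the number of permutations in 𝔖_n with descent set S. -/
open scoped Classical

/-!
Since `n ∉ S`, the two alternating sums combine into
`β(S) + β(S ∪ {n}) = Σ_{T ⊆ S} (-1)^{|S - T|} α(T ∪ {n})`.
Ranks can be interpolated in the poset of colored words, so a maximal chain of `P_{T ∪ {n}}`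
has exactly one member of each rank in `T ∪ {n}`. In particular it contains a full colored word,
and `g` fixes the chain only if it fixes that word, i.e. only if `g = 1`. At the identity, a
maximal chain amounts to its full word `u` (`n! r^n` choices) together with the letter sets of
its members, and these flags of subsets of `{1,…,n}` with cardinalities in `T ∪ {n}` correspond
to the permutations `v` with `Des(v) ⊆ T`: the member of size `t` is `{v(1),…,v(t)}`, and
conversely `v` lists the letters block by block, each block increasingly. Thus
`α(T ∪ {n}) = n! r^n Σ_{U ⊆ T} b_n(U)`, and Möbius inversion on the subsets of `S` leaves
`n! r^n b_n(S)`.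
-/

open Finset

section AlternatingSums

variable {α : Type*} [DecidableEq α]

theorem sum_powerset_insert_neg_one_pow {a : α} {S : Finset α} (ha : a ∉ S)
    (f : Finset α → ℤ) :
    ∑ T ∈ (insert a S).powerset, (-1 : ℤ) ^ (#(insert a S) - #T) * f T =
      ∑ T ∈ S.powerset, (-1 : ℤ) ^ (#S - #T) * (f (insert a T) - f T) := by
  rw [sum_powerset_insert ha, ← sum_add_distrib]
  refine sum_congr rfl fun T hT => ?_
  have hTS := mem_powerset.1 hT
  have hcard := card_le_card hTS
  rw [card_insert_of_notMem ha, card_insert_of_notMem fun h => ha (hTS h),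
    show #S + 1 - #T = #S - #T + 1 by omega, Nat.add_sub_add_right, pow_succ]
  ring

theorem sum_powerset_neg_one_pow_mul_sum_powerset (S : Finset α) (b : Finset α → ℤ) :
    ∑ T ∈ S.powerset, (-1 : ℤ) ^ (#S - #T) * ∑ U ∈ T.powerset, b U = b S := by
  induction S using Finset.induction_on generalizing b with
  | empty => simp
  | insert a S ha ih =>
    rw [sum_powerset_insert_neg_one_pow ha, ← ih fun U => b (insert a U)]
    refine sum_congr rfl fun T hT => ?_
    rw [sum_powerset_insert fun h => ha (mem_powerset.1 hT h), add_sub_cancel_left]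

end AlternatingSums

theorem gBeta_add_gBeta_insert {P G : Type*} [Preorder P] [OrderBot P] [OrderTop P]
    (rk : P → ℕ) (act : G → P → P) {m : ℕ} {S : Finset ℕ} (hm : m ∉ S) (g : G) :
    gBeta rk act S g + gBeta rk act (insert m S) g =
      ∑ T ∈ S.powerset, (-1 : ℤ) ^ (#S - #T) * gAlpha rk act (insert m T) g := by
  rw [gBeta, gBeta, sum_powerset_insert_neg_one_pow hm, ← sum_add_distrib]
  exact sum_congr rfl fun T _ => by ring

section RankSelection

def HasIntermediateRanks {P : Type*} [Preorder P] (rk : P → ℕ) : Prop :=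
  ∀ x y : P, x ≤ y → ∀ t, rk x < t → t < rk y → ∃ z, x ≤ z ∧ z ≤ y ∧ rk z = t

def RankFlag {P : Type*} [Preorder P] (rk : P → ℕ) (A : Finset ℕ) : Type _ :=
  {f : A → P // (∀ t, rk (f t) = t) ∧ Monotone f}

variable {P : Type*} [PartialOrder P] {rk : P → ℕ} {C : Set P} {x y : P}

theorem IsChain.eq_of_rk_eq (hrk : StrictMono rk) (hC : IsChain (· ≤ ·) C) (hx : x ∈ C)
    (hy : y ∈ C) (h : rk x = rk y) : x = y := by
  rcases hC.total hx hy with hxy | hyx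
  · exact hxy.eq_of_not_lt fun hlt => (hrk hlt).ne h
  · exact (hyx.eq_of_not_lt fun hlt => (hrk hlt).ne h.symm).symm

theorem IsChain.le_of_rk_le (hrk : StrictMono rk) (hC : IsChain (· ≤ ·) C) (hx : x ∈ C)
    (hy : y ∈ C) (h : rk x ≤ rk y) : x ≤ y := by
  rcases hC.total hx hy with hxy | hyx
  · exact hxy
  · exact (hyx.eq_of_not_lt fun hlt => (hrk hlt).not_ge h).ge

theorem IsChain.finite_of_strictMono [OrderTop P] (hrk : StrictMono rk)
    (hC : IsChain (· ≤ ·) C) : C.Finite :=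
  Set.Finite.of_finite_image
    ((Set.finite_Iic (rk ⊤)).subset (Set.image_subset_iff.2 fun _ _ => hrk.monotone le_top))
    fun _ hx _ hy => hC.eq_of_rk_eq hrk hx hy

variable [OrderBot P] [OrderTop P] {A : Finset ℕ}

theorem bot_mem_and_top_mem_of_mem_maxChainsIn (hC : C ∈ maxChainsIn (rankSel rk A)) :
    ⊥ ∈ C ∧ ⊤ ∈ C := by
  obtain ⟨hsub, hch, hmax⟩ := hC
  have hext : C = insert ⊥ (insert ⊤ C) := by
    refine hmax _ ?_ ?_ ((Set.subset_insert _ _).trans (Set.subset_insert _ _))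
    · exact Set.insert_subset (Or.inr (.inl rfl)) (Set.insert_subset (Or.inr (.inr rfl)) hsub)
    · exact (hch.insert fun _ _ _ => Or.inr le_top).insert fun _ _ _ => Or.inl bot_le
  rw [hext]
  exact ⟨Set.mem_insert _ _, Set.mem_insert_of_mem _ (Set.mem_insert _ _)⟩

/-- Otherwise an element of rank `t` interpolated between the members of the chain just below
and just above rank `t` could be added to it. -/
theorem exists_mem_rk_eq_of_mem_maxChainsIn (hrk : StrictMono rk) (hint : HasIntermediateRanks rk)
    (hC : C ∈ maxChainsIn (rankSel rk A)) {t : ℕ} (ht : t ∈ A) (hbt : rk ⊥ < t)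
    (htt : t < rk ⊤) : ∃ x ∈ C, rk x = t := by
  by_contra! hno
  obtain ⟨hbot, htop⟩ := bot_mem_and_top_mem_of_mem_maxChainsIn hC
  obtain ⟨hsub, hch, hmax⟩ := hC
  have hfin := hch.finite_of_strictMono hrk
  obtain ⟨a, ⟨haC, hat⟩, ha⟩ := Set.exists_max_image {x ∈ C | rk x < t} rk
    (hfin.subset fun _ hx => hx.1) ⟨⊥, hbot, hbt⟩
  obtain ⟨b, ⟨hbC, htb⟩, hb⟩ := Set.exists_min_image {x ∈ C | t < rk x} rk
    (hfin.subset fun _ hx => hx.1) ⟨⊤, htop, htt⟩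
  obtain ⟨z, haz, hzb, hz⟩ := hint a b (hch.le_of_rk_le hrk haC hbC (by omega)) t hat htb
  have hzC : C = insert z C := by
    refine hmax _ (Set.insert_subset (Or.inl (show rk z ∈ A by rwa [hz])) hsub)
      (hch.insert fun x hx _ => ?_) (Set.subset_insert _ _)
    rcases lt_or_gt_of_ne (hno x hx) with hxt | htx
    · exact Or.inr ((hch.le_of_rk_le hrk hx haC (ha x ⟨hx, hxt⟩)).trans haz)
    · exact Or.inl (hzb.trans (hch.le_of_rk_le hrk hbC hx (hb x ⟨hx, htx⟩)))
  exact hno z (hzC ▸ Set.mem_insert z C) hz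

namespace RankFlag

def toChain (f : RankFlag rk A) : Set P := insert ⊥ (insert ⊤ (Set.range f.1))

theorem toChain_mem_maxChainsIn (hrk : StrictMono rk) (f : RankFlag rk A) :
    f.toChain ∈ maxChainsIn (rankSel rk A) := by
  obtain ⟨f, hrkf, hf⟩ := f
  refine ⟨?_, ?_, fun D hD hDch hfD => (hfD.antisymm fun x hx => ?_)⟩
  · rintro _ (rfl | rfl | ⟨t, rfl⟩)
    · exact Or.inr (.inl rfl)
    · exact Or.inr (.inr rfl)
    · exact Or.inl (show rk (f t) ∈ A by rw [hrkf]; exact t.2)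
  · refine (IsChain.insert ?_ fun _ _ _ => Or.inr le_top).insert fun _ _ _ => Or.inl bot_le
    rintro _ ⟨s, rfl⟩ _ ⟨t, rfl⟩ -
    exact (le_total s t).imp (fun h => hf h) fun h => hf h
  · rcases hD hx with hx' | rfl | rfl
    · have hfx : f ⟨rk x, hx'⟩ ∈ D := hfD (.inr (.inr ⟨_, rfl⟩))
      rw [hDch.eq_of_rk_eq hrk hx hfx (hrkf ⟨rk x, hx'⟩).symm]
      exact .inr (.inr ⟨_, rfl⟩)
    · exact .inl rfl
    · exact .inr (.inl rfl)

theorem toChain_injective (hA : ∀ t ∈ A, rk ⊥ < t ∧ t < rk ⊤) :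
    Function.Injective (toChain : RankFlag rk A → Set P) := by
  intro f g hfg
  refine Subtype.ext (funext fun t => ?_)
  have hft : f.1 t ∈ g.toChain := hfg ▸ .inr (.inr ⟨t, rfl⟩)
  rcases hft with hbot | htop | ⟨s, hs⟩
  · exact absurd (hbot ▸ f.2.1 t) (hA t t.2).1.ne
  · exact absurd (htop ▸ f.2.1 t) (hA t t.2).2.ne'
  · obtain rfl : s = t := Subtype.ext ((g.2.1 s).symm.trans (hs ▸ f.2.1 t))
    exact hs.symm

theorem range_toChain (hrk : StrictMono rk) (hint : HasIntermediateRanks rk)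
    (hA : ∀ t ∈ A, rk ⊥ < t ∧ t < rk ⊤) :
    Set.range (toChain : RankFlag rk A → Set P) = maxChainsIn (rankSel rk A) := by
  refine (Set.range_subset_iff.2 (toChain_mem_maxChainsIn hrk)).antisymm fun C hC => ?_
  choose f hfC hrkf using fun t : A =>
    exists_mem_rk_eq_of_mem_maxChainsIn hrk hint hC t.2 (hA t t.2).1 (hA t t.2).2
  have hf : Monotone f := fun s t hst =>
    hC.2.1.le_of_rk_le hrk (hfC s) (hfC t) (by rw [hrkf, hrkf]; exact hst)
  obtain ⟨hbot, htop⟩ := bot_mem_and_top_mem_of_mem_maxChainsIn hC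
  refine ⟨⟨f, hrkf, hf⟩, (toChain_mem_maxChainsIn hrk ⟨f, hrkf, hf⟩).2.2 C hC.1 hC.2.1 ?_⟩
  rintro _ (rfl | rfl | ⟨t, rfl⟩)
  exacts [hbot, htop, hfC t]

end RankFlag

theorem ncard_maxChainsIn_rankSel (hrk : StrictMono rk) (hint : HasIntermediateRanks rk)
    (hA : ∀ t ∈ A, rk ⊥ < t ∧ t < rk ⊤) :
    (maxChainsIn (rankSel rk A)).ncard = Nat.card (RankFlag rk A) := by
  rw [← RankFlag.range_toChain hrk hint hA,
    Set.ncard_range_of_injective (RankFlag.toChain_injective hA)]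

end RankSelection

theorem RankFlag.card_withTop {Q : Type*} [Preorder Q] {rk : WithTop Q → ℕ} {A : Finset ℕ}
    (hA : ∀ t ∈ A, t ≠ rk ⊤) :
    Nat.card (RankFlag rk A) = Nat.card (RankFlag (rk ∘ WithTop.some) A) := by
  refine (Nat.card_eq_of_bijective (fun f => ⟨fun t => f.1 t, f.2.1, WithTop.coe_mono.comp f.2.2⟩)
    ⟨fun f g hfg => ?_, fun f => ?_⟩).symm
  · exact Subtype.ext (funext fun t =>
      WithTop.coe_injective (congrFun (congrArg Subtype.val hfg) t))
  · have hne : ∀ t, f.1 t ≠ ⊤ := fun t htop => hA t t.2 (htop ▸ f.2.1 t).symm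
    refine ⟨⟨fun t => (f.1 t).untop (hne t), fun t => ?_, fun s t hst => ?_⟩, ?_⟩
    · simpa using f.2.1 t
    · simpa [WithTop.untop_le_iff] using f.2.2 hst
    · exact Subtype.ext (funext fun t => WithTop.coe_untop _ _)

theorem List.Sublist.exists_sublist_length_eq {α : Type*} {l₁ l₂ : List α} (h : l₁.Sublist l₂)
    {m : ℕ} (h₁ : l₁.length ≤ m) (h₂ : m ≤ l₂.length) :
    ∃ l, l₁.Sublist l ∧ l.Sublist l₂ ∧ l.length = m := by
  induction h generalizing m with
  | slnil => exact ⟨[], .slnil, .slnil, by simp_all⟩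
  | @cons l₁ l₂ a _ ih =>
    rw [List.length_cons] at h₂
    rcases h₂.lt_or_eq with hm | rfl
    · obtain ⟨l, hl₁, hl₂, hl⟩ := ih h₁ (by omega)
      exact ⟨l, hl₁, hl₂.cons a, hl⟩
    · exact ⟨a :: l₂, ‹l₁.Sublist l₂›.cons a, .refl _, rfl⟩
  | @cons_cons l₁ l₂ a _ ih =>
    simp only [List.length_cons] at h₁ h₂
    obtain ⟨l, hl₁, hl₂, hl⟩ := ih (m := m - 1) (by omega) (by omega)
    exact ⟨a :: l, hl₁.cons_cons a, hl₂.cons_cons a, by simp [hl]; omega⟩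

namespace CInjWord

variable {n r : ℕ}

theorem length_le (u : CInjWord n r) : u.1.length ≤ n := by
  simpa using u.2.length_le_card

def letters (u : CInjWord n r) : Finset (Fin n) := (u.1.map Prod.fst).toFinset

theorem card_letters (u : CInjWord n r) : #u.letters = u.1.length := by
  rw [letters, List.toFinset_card_of_nodup u.2, List.length_map]

theorem letters_mono : Monotone (letters : CInjWord n r → Finset (Fin n)) := fun _ _ h _ ha => by
  simp only [letters, List.mem_toFinset] at ha ⊢
  exact (List.Sublist.map Prod.fst h).subset ha

theorem letters_eq_univ_iff (u : CInjWord n r) : u.letters = univ ↔ u.1.length = n := by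
  rw [← card_eq_iff_eq_univ, card_letters, Fintype.card_fin]

def restrict (u : CInjWord n r) (G : Finset (Fin n)) : CInjWord n r :=
  ⟨u.1.filter fun x => x.1 ∈ G, u.2.sublist (List.filter_sublist.map _)⟩

theorem restrict_mono (u : CInjWord n r) : Monotone u.restrict := fun _ _ h =>
  List.monotone_filter_right _ fun _ hx => by simpa using h (by simpa using hx)

theorem restrict_univ (u : CInjWord n r) : u.restrict univ = u :=
  Subtype.ext (List.filter_eq_self.2 fun _ _ => by simp)

theorem letters_restrict (u : CInjWord n r) (G : Finset (Fin n)) :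
    (u.restrict G).letters = u.letters ∩ G := by
  ext a
  simp only [letters, restrict, List.mem_toFinset, List.mem_map, List.mem_filter, mem_inter]
  aesop

theorem letters_restrict_of_length_eq {u : CInjWord n r} (hu : u.1.length = n)
    (G : Finset (Fin n)) : (u.restrict G).letters = G := by
  rw [letters_restrict, (letters_eq_univ_iff u).2 hu, univ_inter]

theorem restrict_letters_of_le {u v : CInjWord n r} (h : v ≤ u) : u.restrict v.letters = v := by
  have hv : v.1.Sublist (u.restrict v.letters).1 := by
    have := List.Sublist.filter (fun x : Fin n × ZMod r => decide (x.1 ∈ v.letters)) h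
    rwa [List.filter_eq_self.2 fun x hx => by simpa [letters] using ⟨x.2, hx⟩] at this
  refine (Subtype.ext (hv.eq_of_length_le ?_)).symm
  rw [← card_letters, ← card_letters, letters_restrict]
  exact card_le_card inter_subset_right

theorem exists_le_length_eq (u : CInjWord n r) : ∃ w : CInjWord n r, u ≤ w ∧ w.1.length = n := by
  set e := (univ \ u.letters).toList.map fun a => (a, (0 : ZMod r))
  have he : e.map Prod.fst = (univ \ u.letters).toList := by
    simp [e, List.map_map, Function.comp_def]
  refine ⟨⟨u.1 ++ e, ?_⟩, List.sublist_append_left _ _, ?_⟩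
  · rw [List.map_append, he, List.nodup_append]
    refine ⟨u.2, nodup_toList _, fun a ha b hb hab => ?_⟩
    subst hab
    simp only [mem_toList, mem_sdiff, mem_univ, true_and] at hb
    exact hb (List.mem_toFinset.2 ha)
  · rw [List.length_append, List.length_map, length_toList, card_sdiff_of_subset (subset_univ _),
      card_univ, Fintype.card_fin, card_letters]
    have := u.length_le
    omega

theorem eq_one_of_permCWord_eq_self {u : CInjWord n r} (hu : u.1.length = n)
    {g : Equiv.Perm (Fin n)} (hg : permCWord g u = u) : g = 1 := by
  ext a
  obtain ⟨x, hx, rfl⟩ := List.mem_map.1 (List.mem_toFinset.1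
    ((letters_eq_univ_iff u).2 hu ▸ mem_univ a : a ∈ u.letters))
  have hmap : u.1.map (fun p => (g p.1, p.2)) = u.1 := congrArg Subtype.val hg
  exact congrArg (fun p => (p.1 : ℕ))
    (List.map_inj_left.1 (hmap.trans (List.map_id _).symm) x hx)

end CInjWord

section ColoredWordPoset

variable {n r : ℕ}

theorem rkC_strictMono : StrictMono (rkC n r) := by
  intro x y hxy
  induction y with
  | top =>
    induction x with
    | top => exact absurd hxy (lt_irrefl _)
    | coe u => exact Nat.lt_succ_of_le u.length_le
  | coe v =>
    induction x with
    | top => exact absurd hxy not_top_lt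
    | coe u =>
      have h : u.1.Sublist v.1 := WithTop.coe_le_coe.1 hxy.le
      exact h.length_le.lt_of_ne fun hl => hxy.ne (congrArg _ (Subtype.ext (h.eq_of_length hl)))

theorem hasIntermediateRanks_rkC : HasIntermediateRanks (rkC n r) := by
  intro x y hxy t hxt hty
  induction x with
  | top => exact absurd (hxt.trans hty) (not_lt.2 (rkC_strictMono.monotone le_top))
  | coe u =>
    obtain ⟨v, huv, hvy, htv⟩ :
        ∃ v : CInjWord n r, u ≤ v ∧ (v : WithTop _) ≤ y ∧ t ≤ v.1.length := by
      induction y with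
      | top =>
        obtain ⟨v, huv, hv⟩ := u.exists_le_length_eq
        exact ⟨v, huv, le_top, by rw [hv]; exact Nat.le_of_lt_succ hty⟩
      | coe v => exact ⟨v, WithTop.coe_le_coe.1 hxy, le_rfl, hty.le⟩
    obtain ⟨l, hul, hlv, hl⟩ :=
      List.Sublist.exists_sublist_length_eq (show u.1.Sublist v.1 from huv) hxt.le htv
    exact ⟨WithTop.some (α := CInjWord n r) ⟨l, v.2.sublist (hlv.map _)⟩,
      WithTop.coe_le_coe.2 hul, (WithTop.coe_le_coe.2 hlv).trans hvy, hl⟩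

theorem rkC_map_permCWord (g : Equiv.Perm (Fin n)) (x : WithTop (CInjWord n r)) :
    rkC n r (WithTop.map (permCWord g) x) = rkC n r x := by
  cases x with
  | top => rfl
  | coe u => exact List.length_map _

theorem permCWord_one : permCWord (1 : Equiv.Perm (Fin n)) = (id : CInjWord n r → CInjWord n r) :=
  funext fun u => Subtype.ext (by simp [permCWord])

end ColoredWordPoset

section WordFlags

variable {n r : ℕ} {A : Finset ℕ}

/-- Each member of a flag is the restriction of its top member `f n` to its own letters. -/
def wordFlagEquiv (hnA : n ∈ A) (hA : ∀ t ∈ A, t ≤ n) :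
    RankFlag (rkC n r ∘ WithTop.some) A ≃
      {u : CInjWord n r // u.1.length = n} × RankFlag (card : Finset (Fin n) → ℕ) A where
  toFun f := (⟨f.1 ⟨n, hnA⟩, f.2.1 _⟩,
    ⟨fun t => (f.1 t).letters, fun t => (f.1 t).card_letters.trans (f.2.1 t),
      CInjWord.letters_mono.comp f.2.2⟩)
  invFun p := ⟨fun t => p.1.1.restrict (p.2.1 t),
    fun t => (CInjWord.card_letters _).symm.trans
      ((congrArg card (CInjWord.letters_restrict_of_length_eq p.1.2 _)).trans (p.2.2.1 t)),
    p.1.1.restrict_mono.comp p.2.2.2⟩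
  left_inv f := Subtype.ext (funext fun t =>
    CInjWord.restrict_letters_of_le (f.2.2 (show t.1 ≤ n from hA t t.2)))
  right_inv p := by
    refine Prod.ext (Subtype.ext ?_) (Subtype.ext (funext fun t =>
      CInjWord.letters_restrict_of_length_eq p.1.2 _))
    have htop : p.2.1 ⟨n, hnA⟩ = univ := eq_univ_of_card _ (by rw [p.2.2.1]; simp)
    show p.1.1.restrict (p.2.1 ⟨n, hnA⟩) = p.1.1
    rw [htop, CInjWord.restrict_univ]

def injectiveFstEquiv (ι α β : Type*) :
    {f : ι → α × β // Function.Injective (Prod.fst ∘ f)} ≃ (ι ↪ α) × (ι → β) where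
  toFun f := (⟨Prod.fst ∘ f.1, f.2⟩, Prod.snd ∘ f.1)
  invFun p := ⟨fun i => (p.1 i, p.2 i), p.1.injective⟩
  left_inv _ := rfl
  right_inv _ := rfl

theorem card_fullCInjWord :
    Nat.card {u : CInjWord n r // u.1.length = n} = n.factorial * r ^ n := by
  let toWord (f : {f : Fin n → Fin n × ZMod r // Function.Injective (Prod.fst ∘ f)}) :
      {u : CInjWord n r // u.1.length = n} :=
    ⟨⟨List.ofFn f.1, by rw [List.map_ofFn, List.nodup_ofFn]; exact f.2⟩, List.length_ofFn⟩
  have hbij : Function.Bijective toWord := by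
    refine ⟨fun f g hfg => Subtype.ext (List.ofFn_injective (congrArg (·.1.1) hfg)), ?_⟩
    rintro ⟨⟨l, hl⟩, hlen⟩
    have hof : List.ofFn (fun i : Fin n => l.get (Fin.cast hlen.symm i)) = l :=
      (List.ofFn_congr hlen l.get).symm.trans (List.ofFn_get l)
    refine ⟨⟨_, List.nodup_ofFn.1 (by rw [← List.map_ofFn, hof]; exact hl)⟩, ?_⟩
    exact Subtype.ext (Subtype.ext hof)
  rw [← Nat.card_eq_of_bijective _ hbij, Nat.card_congr (injectiveFstEquiv _ _ _),
    Nat.card_prod, Nat.card_fun, Nat.card_zmod, Nat.card_eq_fintype_card (α := Fin n ↪ Fin n),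
    Fintype.card_embedding_eq, Nat.card_eq_fintype_card, Fintype.card_fin, Nat.descFactorial_self]

end WordFlags

theorem Fin.mem_iff_lt_card_of_isLowerSet {n : ℕ} {s : Finset (Fin n)}
    (hs : IsLowerSet (s : Set (Fin n))) (i : Fin n) : i ∈ s ↔ (i : ℕ) < #s := by
  constructor
  · intro hi
    have := card_le_card fun j hj => hs (mem_Iic.1 hj) hi
    rw [Fin.card_Iic] at this
    omega
  · intro h
    by_contra hi
    have := card_le_card fun j hj => mem_Iio.2 (lt_of_not_ge fun hij => hi (hs hij hj))
    rw [Fin.card_Iio] at this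
    omega

theorem Equiv.Perm.eq_of_strictMono_comp {n : ℕ} {β : Type*} [Preorder β] {f : Fin n → β}
    {v w : Equiv.Perm (Fin n)} (hv : StrictMono (f ∘ v)) (hw : StrictMono (f ∘ w)) : v = w := by
  have hfvw : f ∘ v = f ∘ w :=
    (hv.range_inj hw).1 (by rw [EquivLike.range_comp, EquivLike.range_comp])
  have hf : Function.Injective f := by
    simpa [Function.comp_assoc] using hv.injective.comp v.symm.injective
  exact Equiv.ext fun i => hf (congrFun hfvw i)

theorem exists_perm_strictMono_comp {n : ℕ} {β : Type*} [LinearOrder β] {f : Fin n → β}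
    (hf : Function.Injective f) : ∃ v : Equiv.Perm (Fin n), StrictMono (f ∘ v) :=
  ⟨Tuple.sort f, (Tuple.monotone_sort f).strictMono_of_injective
    (hf.comp (Tuple.sort f).injective)⟩

section DescentFlags

variable {n : ℕ} {T : Finset ℕ}

theorem add_one_mem_descentSet_iff {v : Equiv.Perm (Fin n)} {k : ℕ} (hk : k + 1 < n) :
    k + 1 ∈ descentSet v ↔ v ⟨k + 1, hk⟩ < v ⟨k, by omega⟩ := by
  simp only [descentSet, permApp, mem_filter, mem_Icc, Nat.add_sub_cancel, dif_pos hk,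
    dif_pos (show k < n by omega), Fin.lt_def]
  omega

theorem Equiv.Perm.lt_of_forall_notMem_descentSet {v : Equiv.Perm (Fin n)} {i j : Fin n}
    (hij : i < j) (h : ∀ d ∈ descentSet v, ¬((i : ℕ) < d ∧ d ≤ j)) : v i < v j := by
  obtain ⟨j, hj⟩ := j
  induction j with
  | zero => exact absurd (Fin.lt_def.1 hij) (Nat.not_lt_zero _)
  | succ m ih =>
    have hstep : v ⟨m, by omega⟩ < v ⟨m + 1, hj⟩ := by
      refine lt_of_not_ge fun hle => h _ ((add_one_mem_descentSet_iff hj).2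
        (hle.lt_of_ne (v.injective.ne (by simp)))) ⟨hij, le_rfl⟩
    rcases (Nat.lt_succ_iff.1 (Fin.lt_def.1 hij)).lt_or_eq with him | him
    · exact (ih (by omega) him fun d hd hid => h d hd ⟨hid.1, by simp at hid ⊢; omega⟩).trans hstep
    · exact (show i = ⟨m, by omega⟩ from Fin.ext him) ▸ hstep

theorem card_filter_symm_lt (v : Equiv.Perm (Fin n)) {t : ℕ} (ht : t ≤ n) :
    #{j | (v.symm j : ℕ) < t} = t := by
  rw [card_equiv v.symm (t := {i : Fin n | (i : ℕ) < t}) (by simp), Fin.card_filter_val_lt,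
    min_eq_right ht]

def prefixFlag (hT : ∀ t ∈ T, t ≤ n) (v : Equiv.Perm (Fin n)) :
    RankFlag (card : Finset (Fin n) → ℕ) (insert n T) :=
  ⟨fun t => {j | (v.symm j : ℕ) < t},
    fun t => card_filter_symm_lt v (by rcases mem_insert.1 t.2 with h | h <;> simp_all),
    fun _ _ hst _ => by simpa using fun h => h.trans_le hst⟩

namespace RankFlag

variable (F : RankFlag (card : Finset (Fin n) → ℕ) (insert n T))

theorem apply_top_eq_univ : F.1 ⟨n, mem_insert_self n T⟩ = univ :=
  eq_univ_of_card _ (by rw [F.2.1]; simp)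

def block (j : Fin n) : ↥(insert n T) :=
  ({t | j ∈ F.1 t} : Finset ↥(insert n T)).min'
    ⟨⟨n, mem_insert_self n T⟩, by simp [F.apply_top_eq_univ]⟩

theorem block_le_iff {j : Fin n} {t : ↥(insert n T)} : F.block j ≤ t ↔ j ∈ F.1 t :=
  ⟨fun h => F.2.2 h (mem_filter.1 (min'_mem ({t | j ∈ F.1 t} : Finset ↥(insert n T)) _)).2,
    fun h => min'_le ({t | j ∈ F.1 t} : Finset ↥(insert n T)) t (mem_filter.2 ⟨mem_univ _, h⟩)⟩

/-- Sorting `Fin n` by `key` recovers the permutation whose prefix flag is `F`. -/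
def key (j : Fin n) : ↥(insert n T) ×ₗ Fin n := toLex (F.block j, j)

theorem key_injective : Function.Injective F.key := fun _ _ h => congrArg (·.2) (toLex.injective h)

variable {F}

theorem mem_iff_lt_of_strictMono {v : Equiv.Perm (Fin n)} (hv : StrictMono (F.key ∘ v))
    (t : ↥(insert n T)) (i : Fin n) : v i ∈ F.1 t ↔ (i : ℕ) < t := by
  have hlow : IsLowerSet (({i | v i ∈ F.1 t} : Finset (Fin n)) : Set (Fin n)) := by
    intro a b hba ha
    simp only [coe_filter, mem_univ, true_and, Set.mem_ofPred_eq, ← block_le_iff] at ha ⊢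
    refine le_trans ?_ ha
    have := hv.monotone hba
    simp only [Function.comp, key, Prod.Lex.toLex_le_toLex] at this
    exact this.elim le_of_lt fun h => h.1.le
  have hcard : #{i | v i ∈ F.1 t} = t := (card_equiv v (by simp)).trans (F.2.1 t)
  rw [← hcard, ← Fin.mem_iff_lt_card_of_isLowerSet hlow]
  simp

theorem prefixFlag_eq_of_strictMono (hT : ∀ t ∈ T, t ≤ n) {v : Equiv.Perm (Fin n)}
    (hv : StrictMono (F.key ∘ v)) : prefixFlag hT v = F :=
  Subtype.ext (funext fun t => ext fun j => by
    simpa [prefixFlag] using (mem_iff_lt_of_strictMono hv t (v.symm j)).symm)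

theorem descentSet_subset_of_strictMono {v : Equiv.Perm (Fin n)} (hv : StrictMono (F.key ∘ v)) :
    descentSet v ⊆ T := by
  intro d hd
  have hd' := (mem_filter.1 hd).1
  rw [mem_Icc] at hd'
  obtain ⟨k, rfl⟩ : ∃ k, d = k + 1 := ⟨d - 1, by omega⟩
  have hk : k + 1 < n := by omega
  have hblock : F.block (v ⟨k, by omega⟩) < F.block (v ⟨k + 1, hk⟩) := by
    have := hv (show (⟨k, by omega⟩ : Fin n) < ⟨k + 1, hk⟩ from Fin.mk_lt_mk.2 k.lt_succ_self)
    simp only [Function.comp, key, Prod.Lex.toLex_lt_toLex] at this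
    exact this.resolve_right fun h => lt_asymm h.2 ((add_one_mem_descentSet_iff hk).1 hd)
  set t := F.block (v ⟨k, by omega⟩)
  have h1 : k < t := (mem_iff_lt_of_strictMono hv t _).1 (F.block_le_iff.1 le_rfl)
  have h2 : ¬k + 1 < t := fun h =>
    hblock.not_ge (F.block_le_iff.2 ((mem_iff_lt_of_strictMono hv t _).2 h))
  have ht : (t : ℕ) = k + 1 := by omega
  rcases mem_insert.1 t.2 with h | h
  · omega
  · rwa [← ht]

end RankFlag

theorem block_prefixFlag_le_iff (hT : ∀ t ∈ T, t ≤ n) (v : Equiv.Perm (Fin n)) (i : Fin n)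
    (t : ↥(insert n T)) : (prefixFlag hT v).block (v i) ≤ t ↔ (i : ℕ) < t := by
  rw [RankFlag.block_le_iff]
  simp [prefixFlag]

theorem strictMono_key_prefixFlag (hT : ∀ t ∈ T, t ≤ n) {v : Equiv.Perm (Fin n)}
    (hv : descentSet v ⊆ T) : StrictMono ((prefixFlag hT v).key ∘ v) := by
  intro i j hij
  have hle : (prefixFlag hT v).block (v i) ≤ (prefixFlag hT v).block (v j) :=
    (block_prefixFlag_le_iff hT v i _).2
      (lt_trans hij ((block_prefixFlag_le_iff hT v j _).1 le_rfl))
  simp only [Function.comp, RankFlag.key, Prod.Lex.toLex_lt_toLex]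
  refine hle.lt_or_eq.imp_right fun heq => ⟨heq, v.lt_of_forall_notMem_descentSet hij
    fun d hd hid => ?_⟩
  let td : ↥(insert n T) := ⟨d, mem_insert_of_mem (hv hd)⟩
  have h1 : (prefixFlag hT v).block (v i) ≤ td := (block_prefixFlag_le_iff hT v i td).2 hid.1
  have h2 : td < (prefixFlag hT v).block (v j) := lt_of_not_ge fun h => by
    have := (block_prefixFlag_le_iff hT v j td).1 h
    simp only [td] at this
    omega
  exact (h1.trans_lt h2).ne heq

theorem card_descentSet_subset (hT : ∀ t ∈ T, t ≤ n) :
    Nat.card {v : Equiv.Perm (Fin n) // descentSet v ⊆ T} =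
      Nat.card (RankFlag (card : Finset (Fin n) → ℕ) (insert n T)) := by
  refine Nat.card_eq_of_bijective (fun v => prefixFlag hT v.1)
    ⟨fun v w hvw => Subtype.ext ?_, fun F => ?_⟩
  · have hw := strictMono_key_prefixFlag hT w.2
    rw [← show prefixFlag hT v.1 = prefixFlag hT w.1 from hvw] at hw
    exact Equiv.Perm.eq_of_strictMono_comp (strictMono_key_prefixFlag hT v.2) hw
  · obtain ⟨v, hv⟩ := exists_perm_strictMono_comp F.key_injective
    exact ⟨⟨v, RankFlag.descentSet_subset_of_strictMono hv⟩,
      RankFlag.prefixFlag_eq_of_strictMono hT hv⟩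

theorem card_descentSet_subset_eq_sum (T : Finset ℕ) :
    Nat.card {v : Equiv.Perm (Fin n) // descentSet v ⊆ T} =
      ∑ U ∈ T.powerset, numDescentSet n U := by
  rw [Nat.card_eq_fintype_card, Fintype.card_subtype, card_eq_sum_card_fiberwise
    (f := descentSet) (t := T.powerset) fun v hv => mem_powerset.2 (mem_filter.1 hv).2]
  refine sum_congr rfl fun U hU => ?_
  rw [numDescentSet, Nat.card_eq_fintype_card, Fintype.card_subtype, filter_filter]
  congr 1
  ext v
  simp only [mem_filter, mem_univ, true_and, and_iff_right_iff_imp]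
  rintro rfl
  exact mem_powerset.1 hU

end DescentFlags

section Characters

variable {n r : ℕ}

theorem insert_subset_Icc (hn : 0 < n) {T : Finset ℕ} (hT : T ⊆ Icc 1 (n - 1)) :
    insert n T ⊆ Icc 1 n :=
  insert_subset (mem_Icc.2 ⟨hn, le_rfl⟩) (hT.trans (Icc_subset_Icc_right (Nat.sub_le n 1)))

theorem cAlpha_eq_zero_of_ne_one {A : Finset ℕ} (hA : A ⊆ Icc 1 n) (hnA : n ∈ A)
    {g : Equiv.Perm (Fin n)} (hg : g ≠ 1) : cAlpha n r A g = 0 := by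
  suffices h : {C | C ∈ maxChainsIn (rankSel (rkC n r) A) ∧
      WithTop.map (permCWord g) '' C = C} = ∅ by
    simp [cAlpha, gAlpha, h]
  refine Set.eq_empty_of_forall_notMem fun C ⟨hC, hfix⟩ => hg ?_
  obtain ⟨x, hxC, hx⟩ := exists_mem_rk_eq_of_mem_maxChainsIn rkC_strictMono
    hasIntermediateRanks_rkC hC hnA (show 0 < n from (mem_Icc.1 (hA hnA)).1) (Nat.lt_succ_self n)
  have hgx : WithTop.map (permCWord g) x = x := hC.2.1.eq_of_rk_eq rkC_strictMono
    (hfix ▸ Set.mem_image_of_mem _ hxC) hxC (rkC_map_permCWord g x)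
  cases x with
  | top => exact absurd hx (by simp [rkC])
  | coe u => exact CInjWord.eq_one_of_permCWord_eq_self hx (WithTop.coe_injective hgx)

theorem cAlpha_insert_one (hn : 0 < n) {T : Finset ℕ} (hT : T ⊆ Icc 1 (n - 1)) :
    cAlpha n r (insert n T) 1 =
      n.factorial * r ^ n * ∑ U ∈ T.powerset, (numDescentSet n U : ℤ) := by
  have hA := insert_subset_Icc hn hT
  have hrk : ∀ t ∈ insert n T, rkC n r ⊥ < t ∧ t < rkC n r ⊤ := fun t ht =>
    ⟨(mem_Icc.1 (hA ht)).1, Nat.lt_succ_of_le (mem_Icc.1 (hA ht)).2⟩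
  have hchains :
      cAlpha n r (insert n T) 1 = (maxChainsIn (rankSel (rkC n r) (insert n T))).ncard := by
    simp [cAlpha, gAlpha, permCWord_one]
  rw [hchains, ncard_maxChainsIn_rankSel rkC_strictMono hasIntermediateRanks_rkC hrk,
    RankFlag.card_withTop fun t ht => (hrk t ht).2.ne,
    Nat.card_congr (wordFlagEquiv (mem_insert_self n T) fun t ht => (mem_Icc.1 (hA ht)).2),
    Nat.card_prod, card_fullCInjWord,
    ← card_descentSet_subset fun t ht => (mem_Icc.1 (hA (mem_insert_of_mem ht))).2,
    card_descentSet_subset_eq_sum]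
  push_cast
  ring

end Characters

theorem statement6_general (n r : ℕ) (hn : 0 < n)
    (S : Finset ℕ) (hS : S ⊆ Finset.Icc 1 (n - 1)) :
    ∀ g : Equiv.Perm (Fin n),
      cBeta n r S g + cBeta n r (insert n S) g =
        (numDescentSet n S : ℤ) * (r : ℤ) ^ n *
          (if g = 1 then (n.factorial : ℤ) else 0) := by
  intro g
  have hnS : n ∉ S := fun h => by have := mem_Icc.1 (hS h); omega
  have hT : ∀ T ∈ S.powerset, T ⊆ Icc 1 (n - 1) := fun T hT => (mem_powerset.1 hT).trans hS
  have hsum : cBeta n r S g + cBeta n r (insert n S) g =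
      ∑ T ∈ S.powerset, (-1 : ℤ) ^ (#S - #T) * cAlpha n r (insert n T) g :=
    gBeta_add_gBeta_insert _ _ hnS g
  rw [hsum]
  split_ifs with hg
  · subst hg
    calc ∑ T ∈ S.powerset, (-1 : ℤ) ^ (#S - #T) * cAlpha n r (insert n T) 1
        = n.factorial * r ^ n * ∑ T ∈ S.powerset,
            (-1 : ℤ) ^ (#S - #T) * ∑ U ∈ T.powerset, (numDescentSet n U : ℤ) := by
          rw [mul_sum]
          exact sum_congr rfl fun T hTS => by rw [cAlpha_insert_one hn (hT T hTS)]; ring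
      _ = _ := by
          rw [sum_powerset_neg_one_pow_mul_sum_powerset]
          ring
  · refine sum_eq_zero fun T hTS => ?_
    rw [cAlpha_eq_zero_of_ne_one (insert_subset_Icc hn (hT T hTS)) (mem_insert_self n T) hg,
      mul_zero]

/-- **Eq. (10)**: for the `𝔖_n`-action on the poset of `r`-colored injective words,
`β_P(S) + β_P(S ∪ {n}) = b_n(S) · r^n · ρ^reg` for all `S ⊆ {1,…,n-1}`
(an identity of characters; the character of the regular representation of `𝔖_n`
takes the value `n!` at the identity and `0` elsewhere). -/
theorem statement6 (n r : ℕ) (hn : 0 < n) (hr : 0 < r)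
    (S : Finset ℕ) (hS : S ⊆ Finset.Icc 1 (n - 1)) :
    ∀ g : Equiv.Perm (Fin n),
      cBeta n r S g + cBeta n r (insert n S) g =
        (numDescentSet n S : ℤ) * (r : ℤ) ^ n *
          (if g = 1 then (n.factorial : ℤ) else 0) :=
  statement6_general n r hn S hS
end

section
/- Let P = P_{n,r} be the poset of r-colored injective words. Then b_P({1,…,n}) = Σ_{i=0}^n (−1)^{n−i} r^i · n!/(n−i)! = D_{n,r}, where D_{n,r} is the number of r-colored permutations u ∈ 𝔖_n[ℤ_r] having no fixed point of zero color (i.e., no index i with u(i) = i and u(i) colored with the zero color). -/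
open scoped Classical

noncomputable section AuxProof
open Finset List

namespace CInjWordAux

variable {n r : ℕ}

lemma le_def {u v : CInjWord n r} : u ≤ v ↔ u.1.Sublist v.1 := Iff.rfl

lemma nodup (u : CInjWord n r) : u.1.Nodup := u.2.of_map

lemma length_le_n (u : CInjWord n r) : u.1.length ≤ n := by
  have h := u.2.length_le_card
  simpa using h

lemma eq_of_le_length {u v : CInjWord n r} (h : u ≤ v) (hl : v.1.length ≤ u.1.length) :
    u = v :=
  Subtype.ext ((le_def.1 h).eq_of_length (le_antisymm (le_def.1 h).length_le hl))

lemma length_lt_of_lt {u v : CInjWord n r} (h : u < v) : u.1.length < v.1.length := by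
  refine lt_of_le_of_ne (le_def.1 h.le).length_le (fun he => h.ne ?_)
  exact eq_of_le_length h.le he.ge

lemma bot_val : ((⊥ : CInjWord n r) : CInjWord n r).1 = [] := rfl

lemma eq_bot_iff_len {u : CInjWord n r} : u = ⊥ ↔ u.1.length = 0 := by
  constructor
  · rintro rfl; rfl
  · intro h
    exact Subtype.ext (List.length_eq_zero_iff.1 h)

instance [NeZero r] : Finite (CInjWord n r) := by
  have h : {l : List (Fin n × ZMod r) | l.length ≤ n}.Finite := List.finite_length_le _ n
  haveI := h.to_subtype
  exact Finite.of_injective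
    (fun u : CInjWord n r =>
      (⟨u.1, length_le_n u⟩ : {l : List (Fin n × ZMod r) | l.length ≤ n}))
    (fun u v h => Subtype.ext (by simpa using congrArg Subtype.val h))

instance [NeZero r] : Fintype (CInjWord n r) := Fintype.ofFinite _

/-- Counting equivalence for words of a fixed length. -/
def wordEquiv (m : ℕ) :
    {u : CInjWord n r // u.1.length = m} ≃ (Fin m ↪ Fin n) × (Fin m → ZMod r) where
  toFun u :=
    (⟨fun i => (u.1.1.get (Fin.cast u.2.symm i)).1, by
        intro i j hij
        have hnd := u.1.2
        rw [List.nodup_iff_injective_get] at hnd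
        have key : ∀ k : Fin m, (u.1.1.map Prod.fst).get
            (Fin.cast (by simp [u.2]) k) = (u.1.1.get (Fin.cast u.2.symm k)).1 := by
          intro k
          simp [List.get_eq_getElem, List.getElem_map]
        have := hnd (a₁ := Fin.cast (by simp [u.2]) i) (a₂ := Fin.cast (by simp [u.2]) j)
          (by rw [key i, key j]; exact hij)
        simpa [Fin.ext_iff] using this⟩,
      fun i => (u.1.1.get (Fin.cast u.2.symm i)).2)
  invFun ec :=
    ⟨⟨List.ofFn (fun i => (ec.1 i, ec.2 i)), by
        have : (List.ofFn (fun i => (ec.1 i, ec.2 i))).map Prod.fst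
            = List.ofFn (fun i => ec.1 i) := by
          rw [List.map_ofFn]; rfl
        rw [this, List.nodup_ofFn]
        exact ec.1.injective⟩, by simp⟩
  left_inv := by
    rintro ⟨⟨l, hl⟩, hm⟩
    subst hm
    simp only [Subtype.mk.injEq]
    apply Subtype.ext
    simp only []
    apply Subtype.ext
    exact List.ofFn_get l
  right_inv := by
    rintro ⟨e, c⟩
    ext i <;> simp [List.get_ofFn]

lemma card_words (m : ℕ) [NeZero r] :
    (univ.filter (fun u : CInjWord n r => u.1.length = m)).card
      = r ^ m * n.descFactorial m := by
  have h1 : (univ.filter (fun u : CInjWord n r => u.1.length = m)).card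
      = Fintype.card {u : CInjWord n r // u.1.length = m} :=
    (Fintype.card_subtype _).symm
  rw [h1, Fintype.card_congr (wordEquiv m), Fintype.card_prod,
    Fintype.card_embedding_eq, Fintype.card_fun, ZMod.card, Fintype.card_fin,
    Fintype.card_fin]
  ring

lemma card_sublists (w : CInjWord n r) (j : ℕ) [NeZero r] :
    (univ.filter (fun u : CInjWord n r => u ≤ w ∧ u.1.length = j)).card
      = (w.1.length).choose j := by
  classical
  rw [← List.length_sublistsLen j w.1,
    ← List.toFinset_card_of_nodup (List.nodup_sublistsLen j (nodup w))]
  apply Finset.card_bij (fun u _ => u.1)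
  · intro u hu
    rw [Finset.mem_filter] at hu
    simp only [List.mem_toFinset, List.mem_sublistsLen]
    exact ⟨le_def.1 hu.2.1, hu.2.2⟩
  · intro u hu v hv h
    exact Subtype.ext h
  · intro l hl
    simp only [List.mem_toFinset, List.mem_sublistsLen] at hl
    have hnd : (l.map Prod.fst).Nodup := (hl.1.map Prod.fst).nodup w.2
    refine ⟨⟨l, hnd⟩, ?_, rfl⟩
    exact Finset.mem_filter.2 ⟨mem_univ _, hl.1, hl.2⟩

lemma sublist_interpolate {β : Type*} {l₁ l₂ : List β} (h : l₁.Sublist l₂) :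
    ∀ t, l₁.length ≤ t → t ≤ l₂.length →
      ∃ l, l₁.Sublist l ∧ l.Sublist l₂ ∧ l.length = t := by
  induction h with
  | slnil =>
    intro t h1 h2
    simp only [List.length_nil, Nat.le_zero] at h2
    exact ⟨[], List.Sublist.refl _, List.Sublist.refl _, by simp [h2]⟩
  | @cons l₁ l₂ a h ih =>
    intro t h1 h2
    rcases Nat.lt_or_ge t (l₂.length + 1) with ht | ht
    · obtain ⟨l, hl1, hl2, hl3⟩ := ih t h1 (by omega)
      exact ⟨l, hl1, hl2.cons a, hl3⟩
    · refine ⟨a :: l₂, h.cons a, List.Sublist.refl _, ?_⟩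
      simp only [List.length_cons] at h2 ⊢
      omega
  | @cons_cons l₁ l₂ a h ih =>
    intro t h1 h2
    simp only [List.length_cons] at h1 h2
    obtain ⟨l, hl1, hl2, hl3⟩ := ih (t - 1) (by omega) (by omega)
    refine ⟨a :: l, hl1.cons₂ a, hl2.cons₂ a, ?_⟩
    simp only [List.length_cons, hl3]
    omega

lemma exists_extension [NeZero r] (u : CInjWord n r) (t : ℕ) (h1 : u.1.length ≤ t)
    (h2 : t ≤ n) : ∃ w : CInjWord n r, u ≤ w ∧ w.1.length = t := by
  obtain ⟨k, hk⟩ : ∃ k, t = u.1.length + k := ⟨t - u.1.length, by omega⟩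
  subst hk
  clear h1
  induction k generalizing u with
  | zero => exact ⟨u, le_refl _, rfl⟩
  | succ k ih =>
    have hlen : u.1.length < n := by omega
    have : ∃ a : Fin n, a ∉ u.1.map Prod.fst := by
      by_contra hcon
      push_neg at hcon
      have hsub : (univ : Finset (Fin n)) ⊆ (u.1.map Prod.fst).toFinset := by
        intro a _
        simpa using hcon a
      have := Finset.card_le_card hsub
      rw [List.toFinset_card_of_nodup u.2] at this
      simp only [card_univ, Fintype.card_fin, List.length_map] at this
      omega
    obtain ⟨a, ha⟩ := this
    set u' : CInjWord n r := ⟨u.1 ++ [(a, 0)], by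
      rw [List.map_append, List.nodup_append]
      refine ⟨u.2, by simp, ?_⟩
      simp only [List.map_cons, List.map_nil]
      intro x hx y hy hxy
      simp only [List.mem_singleton] at hy
      exact ha (by rw [← hy, ← hxy]; exact hx)⟩ with hu'
    have hlen' : u'.1.length = u.1.length + 1 := by simp [hu']
    obtain ⟨w, hw1, hw2⟩ := ih u' (by rw [hlen']; omega)
    refine ⟨w, le_trans ?_ hw1, by rw [hw2, hlen']; omega⟩
    exact List.sublist_append_left _ _

section MaxChains
variable [NeZero r]

lemma coe_bot_eq : ((⊥ : CInjWord n r) : WithTop (CInjWord n r)) = ⊥ := rfl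

lemma rk_top : rkC n r ⊤ = n + 1 := rfl

lemma rk_coe (u : CInjWord n r) : rkC n r (u : WithTop (CInjWord n r)) = u.1.length := rfl

/-- The finset of chains of colored injective words with length-image `T`. -/
def keyFinset (n r : ℕ) [NeZero r] (T : Finset ℕ) : Finset (Finset (CInjWord n r)) :=
  univ.filter (fun c => _root_.IsChain (· ≤ ·) (c : Set (CInjWord n r)) ∧
    c.image (fun u => u.1.length) = T)

/-- Completion of a finite chain of words by `⊥` and `⊤`. -/
def Phi (c : Finset (CInjWord n r)) : Set (WithTop (CInjWord n r)) :=
  {⊥, ⊤} ∪ (fun u : CInjWord n r => (u : WithTop (CInjWord n r))) '' ↑c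

lemma mem_rankSel_iff {T : Finset ℕ} (x : WithTop (CInjWord n r)) :
    x ∈ rankSel (rkC n r) T ↔ rkC n r x ∈ T ∨ x = ⊥ ∨ x = ⊤ := by
  simp only [rankSel, Set.mem_union, Set.mem_insert_iff, Set.mem_singleton_iff,
    Set.mem_setOf_eq]

lemma phi_maxchain {T : Finset ℕ} (hT : T ⊆ Finset.Icc 1 n) {c : Finset (CInjWord n r)}
    (hchain : _root_.IsChain (· ≤ ·) (c : Set (CInjWord n r)))
    (himg : c.image (fun u => u.1.length) = T) :
    Phi c ∈ maxChainsIn (rankSel (rkC n r) T) := by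
  have hmemT : ∀ u ∈ c, u.1.length ∈ T := fun u hu => himg ▸ Finset.mem_image_of_mem _ hu
  refine ⟨?_, ?_, ?_⟩
  · rintro x (hx | ⟨u, hu, rfl⟩)
    · exact Or.inr hx
    · exact Or.inl (hmemT u hu)
  · rintro x (hx | ⟨u, hu, rfl⟩) y (hy | ⟨v, hv, rfl⟩) hxy
    · rcases hx with rfl | rfl
      · exact Or.inl bot_le
      · exact Or.inr le_top
    · rcases hx with rfl | rfl
      · exact Or.inl bot_le
      · exact Or.inr le_top
    · rcases hy with rfl | rfl
      · exact Or.inr bot_le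
      · exact Or.inl le_top
    · have huv : u ≠ v := fun h => hxy (by rw [h])
      rcases hchain hu hv huv with h | h
      · exact Or.inl (WithTop.coe_le_coe.2 h)
      · exact Or.inr (WithTop.coe_le_coe.2 h)
  · intro D hD hDchain hsubD
    refine Set.Subset.antisymm hsubD (fun d hd => ?_)
    rcases (mem_rankSel_iff d).1 (hD hd) with hrk | hbt | htp
    · have hdne : d ≠ ⊤ := by
        rintro rfl
        rw [rk_top] at hrk
        have := Finset.mem_Icc.1 (hT hrk)
        omega
      obtain ⟨u, rfl⟩ := WithTop.ne_top_iff_exists.1 hdne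
      rw [rk_coe] at hrk
      obtain ⟨v, hv, hlen⟩ := Finset.mem_image.1 (himg.symm ▸ hrk)
      have hvD : ((v : WithTop (CInjWord n r))) ∈ D :=
        hsubD (Or.inr ⟨v, hv, rfl⟩)
      rcases eq_or_ne ((u : WithTop (CInjWord n r))) ((v : WithTop (CInjWord n r))) with h | h
      · rw [h]; exact Or.inr ⟨v, hv, rfl⟩
      · rcases hDchain hd hvD h with hle | hle
        · have : u = v := eq_of_le_length (WithTop.coe_le_coe.1 hle) (le_of_eq hlen)
          exact absurd (congrArg _ this) h
        · have : v = u := eq_of_le_length (WithTop.coe_le_coe.1 hle) (le_of_eq hlen.symm)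
          exact absurd (congrArg _ this.symm) h
    · rw [hbt]; exact Or.inl (Or.inl rfl)
    · rw [htp]; exact Or.inl (Or.inr rfl)

lemma phi_injOn {T : Finset ℕ} (hT : T ⊆ Finset.Icc 1 n) :
    Set.InjOn Phi ((keyFinset n r T : Set (Finset (CInjWord n r)))) := by
  have key : ∀ c c' : Finset (CInjWord n r),
      c.image (fun u => u.1.length) = T → Phi c = Phi c' → c ⊆ c' := by
    intro c c' himg h u hu
    have h1 : ((u : WithTop (CInjWord n r))) ∈ Phi c' := h ▸ Or.inr ⟨u, hu, rfl⟩
    rcases h1 with (h2 | h2) | ⟨v, hv, hveq⟩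
    · exfalso
      rw [← coe_bot_eq, WithTop.coe_eq_coe] at h2
      have : u.1.length ∈ T := himg ▸ Finset.mem_image_of_mem _ hu
      have h3 := Finset.mem_Icc.1 (hT this)
      have h0 : ((⊥ : CInjWord n r)).1.length = 0 := rfl
      rw [h2] at h3
      omega
    · exact absurd h2 (WithTop.coe_ne_top)
    · rwa [WithTop.coe_eq_coe.1 hveq] at hv
  intro c hc c' hc' h
  rw [Finset.mem_coe, keyFinset, Finset.mem_filter] at hc hc'
  exact Finset.Subset.antisymm (key c c' hc.2.2 h) (key c' c hc'.2.2 h.symm)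

lemma maxchain_eq_phi {T : Finset ℕ} (hT : T ⊆ Finset.Icc 1 n)
    {C : Set (WithTop (CInjWord n r))} (hC : C ∈ maxChainsIn (rankSel (rkC n r) T)) :
    ∃ c ∈ keyFinset n r T, Phi c = C := by
  obtain ⟨hsub, hchain, hmax⟩ := hC
  have hbot : (⊥ : WithTop (CInjWord n r)) ∈ C := by
    have h1 : C = insert ⊥ C := by
      refine hmax _ ?_ (hchain.insert fun b _ _ => Or.inl bot_le) (Set.subset_insert _ _)
      rintro x (rfl | hx)
      · exact (mem_rankSel_iff _).2 (Or.inr (Or.inl rfl))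
      · exact hsub hx
    rw [h1]; exact Set.mem_insert _ _
  have htop : (⊤ : WithTop (CInjWord n r)) ∈ C := by
    have h1 : C = insert ⊤ C := by
      refine hmax _ ?_ (hchain.insert fun b _ _ => Or.inr le_top) (Set.subset_insert _ _)
      rintro x (rfl | hx)
      · exact (mem_rankSel_iff _).2 (Or.inr (Or.inr rfl))
      · exact hsub hx
    rw [h1]; exact Set.mem_insert _ _
  have hlenbot : ((⊥ : CInjWord n r)).1.length = 0 := rfl
  have hex : ∀ t ∈ T, ∃ u : CInjWord n r, ((u : WithTop (CInjWord n r))) ∈ C ∧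
      u.1.length = t := by
    intro t ht
    have ht1 := Finset.mem_Icc.1 (hT ht)
    set B : Finset (CInjWord n r) :=
      univ.filter (fun u => ((u : WithTop (CInjWord n r))) ∈ C ∧ u.1.length ≤ t) with hB
    have hBne : B.Nonempty := by
      refine ⟨⊥, ?_⟩
      rw [hB, Finset.mem_filter]
      refine ⟨mem_univ _, ?_, by rw [hlenbot]; omega⟩
      rw [coe_bot_eq]; exact hbot
    obtain ⟨u₀, hu₀B, hu₀max⟩ :=
      (by obtain ⟨m, hm1, hm2⟩ := Finset.exists_maximal hBne; exact ⟨m, hm1, fun x hx hlt => lt_irrefl _ (lt_of_lt_of_le hlt (hm2 hx hlt.le))⟩ : ∃ m ∈ B, ∀ x ∈ B, ¬ m < x)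
    rw [hB, Finset.mem_filter] at hu₀B
    have hu₀great : ∀ x : CInjWord n r, ((x : WithTop (CInjWord n r))) ∈ C →
        x.1.length ≤ t → x ≤ u₀ := by
      intro x hxC hxlen
      rcases eq_or_ne x u₀ with rfl | hne
      · exact le_refl _
      rcases hchain hxC hu₀B.2.1 (fun h => hne (WithTop.coe_eq_coe.1 h)) with h | h
      · exact WithTop.coe_le_coe.1 h
      · have hx : x ∈ B := by rw [hB, Finset.mem_filter]; exact ⟨mem_univ _, hxC, hxlen⟩
        exact absurd (lt_of_le_of_ne (WithTop.coe_le_coe.1 h) (Ne.symm hne)) (hu₀max x hx)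
    have hW : ∃ w : CInjWord n r, w.1.length = t ∧
        ∀ b ∈ C, ((w : WithTop (CInjWord n r))) ≠ b →
          ((w : WithTop (CInjWord n r))) ≤ b ∨ b ≤ ((w : WithTop (CInjWord n r))) := by
      set A : Finset (CInjWord n r) :=
        univ.filter (fun u => ((u : WithTop (CInjWord n r))) ∈ C ∧ t < u.1.length) with hA
      by_cases hAne : A.Nonempty
      · obtain ⟨u₁, hu₁A, hu₁min⟩ :=
      (by obtain ⟨m, hm1, hm2⟩ := Finset.exists_minimal hAne; exact ⟨m, hm1, fun x hx hlt => lt_irrefl _ (lt_of_lt_of_le hlt (hm2 hx hlt.le))⟩ : ∃ m ∈ A, ∀ x ∈ A, ¬ x < m)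
        rw [hA, Finset.mem_filter] at hu₁A
        have hu₁least : ∀ x : CInjWord n r, ((x : WithTop (CInjWord n r))) ∈ C →
            t < x.1.length → u₁ ≤ x := by
          intro x hxC hxlen
          rcases eq_or_ne x u₁ with rfl | hne
          · exact le_refl _
          rcases hchain hxC hu₁A.2.1 (fun h => hne (WithTop.coe_eq_coe.1 h)) with h | h
          · have hx : x ∈ A := by rw [hA, Finset.mem_filter]; exact ⟨mem_univ _, hxC, hxlen⟩
            exact absurd (lt_of_le_of_ne (WithTop.coe_le_coe.1 h) hne) (hu₁min x hx)
          · exact WithTop.coe_le_coe.1 h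
        have hne01 : u₀ ≠ u₁ := by
          intro h
          have h1 := hu₀B.2.2
          have h2 := hu₁A.2.2
          rw [h] at h1; omega
        have hle01 : u₀ ≤ u₁ := by
          rcases hchain hu₀B.2.1 hu₁A.2.1 (fun h => hne01 (WithTop.coe_eq_coe.1 h)) with h | h
          · exact WithTop.coe_le_coe.1 h
          · exfalso
            have := (le_def.1 (WithTop.coe_le_coe.1 h)).length_le
            have h1 := hu₀B.2.2; have h2 := hu₁A.2.2; omega
        obtain ⟨l, hl1, hl2, hl3⟩ :=
          sublist_interpolate (le_def.1 hle01) t hu₀B.2.2 (le_of_lt hu₁A.2.2)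
        have hndl : (l.map Prod.fst).Nodup := (hl2.map Prod.fst).nodup u₁.2
        refine ⟨⟨l, hndl⟩, hl3, ?_⟩
        intro b hb hneb
        rcases eq_or_ne b ⊤ with rfl | hbt
        · exact Or.inl le_top
        obtain ⟨v, rfl⟩ := WithTop.ne_top_iff_exists.1 hbt
        rcases le_or_gt v.1.length t with hvt | hvt
        · exact Or.inr (WithTop.coe_le_coe.2 (le_trans (hu₀great v hb hvt) (le_def.2 hl1)))
        · exact Or.inl (WithTop.coe_le_coe.2 (le_trans (le_def.2 hl2) (hu₁least v hb hvt)))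
      · obtain ⟨w, hw1, hw2⟩ := exists_extension u₀ t hu₀B.2.2 ht1.2
        refine ⟨w, hw2, ?_⟩
        intro b hb hneb
        rcases eq_or_ne b ⊤ with rfl | hbt
        · exact Or.inl le_top
        obtain ⟨v, rfl⟩ := WithTop.ne_top_iff_exists.1 hbt
        have hvt : v.1.length ≤ t := by
          by_contra hcon
          exact hAne ⟨v, by rw [hA, Finset.mem_filter]; exact ⟨mem_univ _, hb, by omega⟩⟩
        exact Or.inr (WithTop.coe_le_coe.2 (le_trans (hu₀great v hb hvt) hw1))
    obtain ⟨w, hwlen, hwcomp⟩ := hW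
    have h1 : C = insert ((w : WithTop (CInjWord n r))) C := by
      refine hmax _ ?_ (hchain.insert fun b hb hne => hwcomp b hb hne) (Set.subset_insert _ _)
      rintro x (rfl | hx)
      · exact (mem_rankSel_iff _).2 (Or.inl (by rw [rk_coe, hwlen]; exact ht))
      · exact hsub hx
    exact ⟨w, by rw [h1]; exact Set.mem_insert _ _, hwlen⟩
  refine ⟨univ.filter (fun u : CInjWord n r =>
      ((u : WithTop (CInjWord n r))) ∈ C ∧ u.1.length ∈ T), ?_, ?_⟩
  · rw [keyFinset, Finset.mem_filter]
    refine ⟨mem_univ _, ?_, ?_⟩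
    · intro x hx y hy hne
      simp only [Finset.mem_coe, Finset.mem_filter, Finset.mem_univ, true_and] at hx hy
      rcases hchain hx.1 hy.1 (fun h => hne (WithTop.coe_eq_coe.1 h)) with h | h
      · exact Or.inl (WithTop.coe_le_coe.1 h)
      · exact Or.inr (WithTop.coe_le_coe.1 h)
    · ext t
      simp only [Finset.mem_image, Finset.mem_filter, Finset.mem_univ, true_and]
      constructor
      · rintro ⟨u, ⟨_, hu2⟩, rfl⟩
        exact hu2
      · intro ht
        obtain ⟨u, huC, hulen⟩ := hex t ht
        exact ⟨u, ⟨huC, hulen ▸ ht⟩, hulen⟩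
  · apply Set.Subset.antisymm
    · rintro x ((rfl | rfl) | ⟨u, hu, rfl⟩)
      · exact hbot
      · exact htop
      · simp only [Finset.mem_coe, Finset.mem_filter] at hu
        exact hu.2.1
    · intro d hd
      rcases (mem_rankSel_iff d).1 (hsub hd) with hrk | hbt | htp
      · have hdne : d ≠ ⊤ := by
          rintro rfl
          rw [rk_top] at hrk
          have := Finset.mem_Icc.1 (hT hrk)
          omega
        obtain ⟨u, rfl⟩ := WithTop.ne_top_iff_exists.1 hdne
        exact Or.inr ⟨u, by
          simp only [Finset.mem_coe, Finset.mem_filter]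
          exact ⟨mem_univ _, hd, hrk⟩, rfl⟩
      · exact Or.inl (Set.mem_insert_iff.2 (Or.inl hbt))
      · exact Or.inl (Set.mem_insert_iff.2 (Or.inr htp))

lemma chainCount_eq {T : Finset ℕ} (hT : T ⊆ Finset.Icc 1 n) :
    chainCount (rkC n r) T = (keyFinset n r T).card := by
  have h1 : maxChainsIn (rankSel (rkC n r) T)
      = Phi '' ((keyFinset n r T : Set (Finset (CInjWord n r)))) := by
    ext C
    constructor
    · intro hC
      obtain ⟨c, hc, hPhi⟩ := maxchain_eq_phi hT hC
      exact ⟨c, hc, hPhi⟩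
    · rintro ⟨c, hc, rfl⟩
      rw [Finset.mem_coe, keyFinset, Finset.mem_filter] at hc
      exact phi_maxchain hT hc.2.1 hc.2.2
  rw [chainCount, h1, Set.ncard_image_of_injOn (phi_injOn hT), Set.ncard_coe_finset]

end MaxChains
section SumEval
variable [NeZero r]

lemma neg_one_pow_sub {a b : ℕ} (h : b ≤ a) : (-1:ℤ)^(a-b) = (-1)^a * (-1)^b := by
  have h1 : (-1:ℤ)^a = (-1)^(a-b) * (-1)^b := by rw [← pow_add, Nat.sub_add_cancel h]
  have h2 : (-1:ℤ)^b * (-1)^b = 1 := by rw [← pow_add, ← two_mul, pow_mul]; norm_num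
  rw [h1, mul_assoc, h2, mul_one]

/-- Chains of nonempty words. -/
def ChainsF (n r : ℕ) [NeZero r] : Finset (Finset (CInjWord n r)) :=
  univ.filter (fun c => _root_.IsChain (· ≤ ·) (c : Set (CInjWord n r)) ∧ (⊥ : CInjWord n r) ∉ c)

lemma mem_ChainsF {c : Finset (CInjWord n r)} :
    c ∈ ChainsF n r ↔ _root_.IsChain (· ≤ ·) (c : Set (CInjWord n r)) ∧ (⊥ : CInjWord n r) ∉ c := by
  rw [ChainsF, Finset.mem_filter]
  simp only [Finset.mem_univ, true_and]

lemma len_pos_of_mem {c : Finset (CInjWord n r)} (hc : c ∈ ChainsF n r)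
    {u : CInjWord n r} (hu : u ∈ c) : 1 ≤ u.1.length := by
  rcases Nat.eq_zero_or_pos u.1.length with h | h
  · exact absurd hu (by rw [eq_bot_iff_len.2 h] at hu ⊢; exact (mem_ChainsF.1 hc).2)
  · exact h

lemma card_image_len {c : Finset (CInjWord n r)} (hc : c ∈ ChainsF n r) :
    (c.image (fun u => u.1.length)).card = c.card := by
  apply Finset.card_image_of_injOn
  intro x hx y hy hxy
  rcases eq_or_ne x y with h | h
  · exact h
  have hxy' : x.1.length = y.1.length := hxy
  rcases (mem_ChainsF.1 hc).1 hx hy h with hle | hle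
  · exact eq_of_le_length hle hxy'.ge
  · exact (eq_of_le_length hle hxy'.le).symm

lemma image_len_subset {c : Finset (CInjWord n r)} (hc : c ∈ ChainsF n r) :
    c.image (fun u => u.1.length) ⊆ Finset.Icc 1 n := by
  intro t ht
  obtain ⟨u, hu, rfl⟩ := Finset.mem_image.1 ht
  exact Finset.mem_Icc.2 ⟨len_pos_of_mem hc hu, length_le_n u⟩

lemma keyFinset_card_eq {T : Finset ℕ} (hT : T ⊆ Finset.Icc 1 n) :
    (keyFinset n r T).card
      = ((ChainsF n r).filter (fun c => c.image (fun u => u.1.length) = T)).card := by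
  congr 1
  ext c
  rw [keyFinset, Finset.mem_filter, Finset.mem_filter, mem_ChainsF]
  constructor
  · rintro ⟨_, hchain, himg⟩
    refine ⟨⟨hchain, fun hbot => ?_⟩, himg⟩
    have h0 : (0 : ℕ) ∈ T := himg ▸ Finset.mem_image_of_mem _ hbot
    have := Finset.mem_Icc.1 (hT h0)
    omega
  · rintro ⟨⟨hchain, _⟩, himg⟩
    exact ⟨mem_univ _, hchain, himg⟩

/-- The greatest element of a (nonempty finite) chain. -/
noncomputable def gr (c : Finset (CInjWord n r)) : CInjWord n r :=
  if h : ∃ m ∈ c, ∀ x ∈ c, x ≤ m then h.choose else ⊥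

lemma gr_eq {c : Finset (CInjWord n r)} {u : CInjWord n r}
    (hu : u ∈ c) (hgreat : ∀ x ∈ c, x ≤ u) : gr c = u := by
  have hex : ∃ m ∈ c, ∀ x ∈ c, x ≤ m := ⟨u, hu, hgreat⟩
  rw [gr, dif_pos hex]
  obtain ⟨hm, hall⟩ := hex.choose_spec
  exact le_antisymm (hgreat _ hm) (hall _ hu)

lemma gr_spec {c : Finset (CInjWord n r)} (hc : _root_.IsChain (· ≤ ·) (c : Set (CInjWord n r)))
    (hne : c.Nonempty) : gr c ∈ c ∧ ∀ x ∈ c, x ≤ gr c := by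
  obtain ⟨m, hm, hmax⟩ :=
      (by obtain ⟨m, hm1, hm2⟩ := Finset.exists_maximal hne; exact ⟨m, hm1, fun x hx hlt => lt_irrefl _ (lt_of_lt_of_le hlt (hm2 hx hlt.le))⟩ : ∃ m ∈ c, ∀ x ∈ c, ¬ m < x)
  have hgreat : ∀ x ∈ c, x ≤ m := by
    intro x hx
    rcases eq_or_ne x m with rfl | hne'
    · exact le_refl _
    rcases hc hx hm hne' with h | h
    · exact h
    · exact absurd (lt_of_le_of_ne h (Ne.symm hne')) (hmax x hx)
  rw [gr_eq hm hgreat]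
  exact ⟨hm, hgreat⟩

/-- Signed sum over all chains of nonempty words contained in `s`. -/
noncomputable def SB (n r : ℕ) [NeZero r] (s : Finset (CInjWord n r)) : ℤ :=
  ∑ c ∈ (ChainsF n r).filter (fun c => c ⊆ s), (-1:ℤ)^c.card

lemma SB_decomp (s : Finset (CInjWord n r)) :
    SB n r s = 1 + ∑ u ∈ s.filter (fun u => u ≠ ⊥),
      -(SB n r (s.filter (fun v => v < u))) := by
  have hsplit := Finset.sum_filter_add_sum_filter_not
    ((ChainsF n r).filter (fun c => c ⊆ s)) (fun c => c = ∅) (fun c => (-1:ℤ)^c.card)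
  rw [SB, ← hsplit]
  congr 1
  · have h0 : (((ChainsF n r).filter (fun c => c ⊆ s)).filter (fun c => c = ∅)) = {∅} := by
      ext c
      simp only [Finset.mem_filter, Finset.mem_singleton]
      constructor
      · tauto
      · rintro rfl
        refine ⟨⟨mem_ChainsF.2 ⟨?_, ?_⟩, Finset.empty_subset s⟩, rfl⟩
        · simp [_root_.IsChain, Set.Pairwise]
        · simp
    rw [h0, Finset.sum_singleton, Finset.card_empty, pow_zero]
  · have hmap : ∀ c ∈ ((ChainsF n r).filter (fun c => c ⊆ s)).filter (fun c => ¬ c = ∅),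
        gr c ∈ s.filter (fun u => u ≠ ⊥) := by
      intro c hc
      simp only [Finset.mem_filter] at hc
      obtain ⟨⟨hcC, hcs⟩, hcne⟩ := hc
      obtain ⟨hg1, hg2⟩ := gr_spec (mem_ChainsF.1 hcC).1 (Finset.nonempty_iff_ne_empty.2 hcne)
      rw [Finset.mem_filter]
      exact ⟨hcs hg1, fun h => (mem_ChainsF.1 hcC).2 (h ▸ hg1)⟩
    rw [← Finset.sum_fiberwise_of_maps_to hmap (fun c => (-1:ℤ)^c.card)]
    apply Finset.sum_congr rfl
    intro u hu
    rw [Finset.mem_filter] at hu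
    rw [SB, ← Finset.sum_neg_distrib]
    refine Finset.sum_nbij' (fun c => c.erase u) (fun c => insert u c) ?_ ?_ ?_ ?_ ?_
    · -- erase maps into chains inside s.filter (< u)
      intro a ha
      simp only [Finset.mem_filter] at ha
      obtain ⟨⟨⟨haC, has⟩, hane⟩, hagr⟩ := ha
      obtain ⟨hg1, hg2⟩ := gr_spec (mem_ChainsF.1 haC).1 (Finset.nonempty_iff_ne_empty.2 hane)
      rw [hagr] at hg1 hg2
      rw [Finset.mem_filter]
      refine ⟨mem_ChainsF.2 ⟨?_, fun h => (mem_ChainsF.1 haC).2 (Finset.mem_of_mem_erase h)⟩, ?_⟩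
      · exact (mem_ChainsF.1 haC).1.mono (by
          rw [Finset.coe_subset]
          exact Finset.erase_subset _ _)
      · intro x hx
        rw [Finset.mem_filter]
        have hxa := Finset.mem_of_mem_erase hx
        exact ⟨has hxa, lt_of_le_of_ne (hg2 x hxa) (Finset.ne_of_mem_erase hx)⟩
    · -- insert maps back
      intro b hb
      simp only [Finset.mem_filter] at hb
      obtain ⟨hbC, hbs⟩ := hb
      have hblt : ∀ x ∈ b, x < u := by
        intro x hx
        have := hbs hx
        rw [Finset.mem_filter] at this
        exact this.2
      have hchain : _root_.IsChain (· ≤ ·) ((insert u b : Finset (CInjWord n r)) : Set (CInjWord n r)) := by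
        rw [Finset.coe_insert]
        exact (mem_ChainsF.1 hbC).1.insert (fun x hx _ => Or.inr (hblt x hx).le)
      have hunotb : u ∉ b := fun h => absurd (hblt u h) (lt_irrefl u)
      simp only [Finset.mem_filter]
      refine ⟨⟨⟨mem_ChainsF.2 ⟨hchain, ?_⟩, ?_⟩, ?_⟩, ?_⟩
      · intro h
        rcases Finset.mem_insert.1 h with h | h
        · exact hu.2 h.symm
        · exact (mem_ChainsF.1 hbC).2 h
      · intro x hx
        rcases Finset.mem_insert.1 hx with rfl | hx
        · exact hu.1
        · have := hbs hx
          rw [Finset.mem_filter] at this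
          exact this.1
      · exact fun h => by simpa [h] using Finset.mem_insert_self u b
      · exact gr_eq (Finset.mem_insert_self u b)
          (fun x hx => by
            rcases Finset.mem_insert.1 hx with rfl | hx
            · exact le_refl _
            · exact (hblt x hx).le)
    · -- left inverse
      intro a ha
      simp only [Finset.mem_filter] at ha
      obtain ⟨⟨⟨haC, _⟩, hane⟩, hagr⟩ := ha
      obtain ⟨hg1, _⟩ := gr_spec (mem_ChainsF.1 haC).1 (Finset.nonempty_iff_ne_empty.2 hane)
      rw [hagr] at hg1
      exact Finset.insert_erase hg1
    · -- right inverse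
      intro b hb
      simp only [Finset.mem_filter] at hb
      have hunotb : u ∉ b := by
        intro h
        have := hb.2 h
        rw [Finset.mem_filter] at this
        exact absurd this.2 (lt_irrefl u)
      exact Finset.erase_insert hunotb
    · -- signs
      intro a ha
      simp only [Finset.mem_filter] at ha
      obtain ⟨⟨⟨haC, _⟩, hane⟩, hagr⟩ := ha
      obtain ⟨hg1, _⟩ := gr_spec (mem_ChainsF.1 haC).1 (Finset.nonempty_iff_ne_empty.2 hane)
      rw [hagr] at hg1
      have hcard : a.card = (a.erase u).card + 1 := by
        rw [Finset.card_erase_of_mem hg1]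
        have := Finset.card_pos.2 ⟨u, hg1⟩
        omega
      rw [hcard, pow_succ]
      ring

lemma len_bot_eq : ((⊥ : CInjWord n r)).1.length = 0 := rfl

lemma SB_below : ∀ ℓ : ℕ, ∀ w : CInjWord n r, w ≠ ⊥ → w.1.length = ℓ →
    SB n r (univ.filter (fun v => v < w)) = -((-1:ℤ)^ℓ) := by
  intro ℓ
  induction ℓ using Nat.strong_induction_on with
  | _ ℓ ih =>
    intro w hw hwlen
    have hℓpos : 1 ≤ ℓ := by
      rcases Nat.eq_zero_or_pos ℓ with h | h
      · exact absurd (eq_bot_iff_len.2 (hwlen.trans h)) hw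
      · omega
    rw [SB_decomp]
    have hstep : ∀ u ∈ (univ.filter (fun v : CInjWord n r => v < w)).filter
        (fun u => u ≠ ⊥),
        -(SB n r (((univ.filter (fun v : CInjWord n r => v < w))).filter
          (fun v => v < u)))
          = (-1:ℤ)^u.1.length := by
      intro u hu
      simp only [Finset.mem_filter, Finset.mem_univ, true_and] at hu
      have hff : (((univ.filter (fun v : CInjWord n r => v < w))).filter
          (fun v => v < u)) = univ.filter (fun v => v < u) := by
        ext x
        simp only [Finset.mem_filter, Finset.mem_univ, true_and]
        exact ⟨fun h => h.2, fun h => ⟨h.trans hu.1, h⟩⟩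
      rw [hff, ih u.1.length (by have := length_lt_of_lt hu.1; omega) u hu.2 rfl]
      ring
    rw [Finset.sum_congr rfl hstep]
    have hmap : ∀ u ∈ (univ.filter (fun v : CInjWord n r => v < w)).filter
        (fun u => u ≠ ⊥), u.1.length ∈ Finset.Ioo 0 ℓ := by
      intro u hu
      simp only [Finset.mem_filter, Finset.mem_univ, true_and] at hu
      rw [Finset.mem_Ioo]
      constructor
      · rcases Nat.eq_zero_or_pos u.1.length with h | h
        · exact absurd (eq_bot_iff_len.2 h) hu.2
        · omega
      · rw [← hwlen]; exact length_lt_of_lt hu.1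
    rw [← Finset.sum_fiberwise_of_maps_to hmap (fun u => (-1:ℤ)^u.1.length)]
    have hfib : ∀ j ∈ Finset.Ioo 0 ℓ,
        (∑ u ∈ ((univ.filter (fun v : CInjWord n r => v < w)).filter
          (fun u => u ≠ ⊥)).filter (fun u => u.1.length = j), (-1:ℤ)^u.1.length)
          = (-1:ℤ)^j * (ℓ.choose j : ℤ) := by
      intro j hj
      rw [Finset.mem_Ioo] at hj
      have hset : ((univ.filter (fun v : CInjWord n r => v < w)).filter
          (fun u => u ≠ ⊥)).filter (fun u => u.1.length = j)
          = univ.filter (fun u : CInjWord n r => u ≤ w ∧ u.1.length = j) := by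
        ext u
        simp only [Finset.mem_filter, Finset.mem_univ, true_and]
        constructor
        · rintro ⟨⟨h1, _⟩, h3⟩
          exact ⟨h1.le, h3⟩
        · rintro ⟨h1, h2⟩
          refine ⟨⟨lt_of_le_of_ne h1 ?_, fun hb => ?_⟩, h2⟩
          · intro h; rw [h, hwlen] at h2; omega
          · rw [hb, len_bot_eq] at h2; omega
      have hconst : ∀ u ∈ univ.filter (fun u : CInjWord n r => u ≤ w ∧ u.1.length = j),
          (-1:ℤ)^u.1.length = (-1:ℤ)^j := by
        intro u hu
        rw [Finset.mem_filter] at hu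
        rw [hu.2.2]
      rw [hset, Finset.sum_congr rfl hconst, Finset.sum_const, card_sublists w j,
        hwlen, nsmul_eq_mul]
      ring
    rw [Finset.sum_congr rfl hfib]
    have hbin : ∑ j ∈ Finset.Ioo 0 ℓ, (-1:ℤ)^j * (ℓ.choose j : ℤ)
        = -1 - (-1:ℤ)^ℓ := by
      have h1 := Int.alternating_sum_range_choose_of_ne (show ℓ ≠ 0 by omega)
      rw [Finset.sum_range_succ] at h1
      have h2 : Finset.range ℓ = insert 0 (Finset.Ioo 0 ℓ) := by
        rw [Finset.range_eq_Ico, ← Finset.Ioo_insert_left (show 0 < ℓ by omega)]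
      rw [h2, Finset.sum_insert (by simp)] at h1
      simp only [pow_zero, Nat.choose_zero_right, Nat.cast_one, one_mul,
        Nat.choose_self] at h1
      linarith
    rw [hbin]
    ring

lemma card_words_pos (ℓ : ℕ) (hℓ : 1 ≤ ℓ) :
    (univ.filter (fun u : CInjWord n r => u ≠ ⊥ ∧ u.1.length = ℓ))
      = univ.filter (fun u : CInjWord n r => u.1.length = ℓ) := by
  ext u
  simp only [Finset.mem_filter, Finset.mem_univ, true_and]
  constructor
  · rintro ⟨_, h⟩; exact h
  · intro h
    refine ⟨fun hb => ?_, h⟩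
    rw [hb, len_bot_eq] at h
    omega

lemma SB_univ :
    SB n r univ = ∑ ℓ ∈ Finset.range (n+1),
      (-1:ℤ)^ℓ * ((r:ℤ)^ℓ * (n.descFactorial ℓ : ℤ)) := by
  rw [SB_decomp]
  have hstep : ∀ u ∈ (univ : Finset (CInjWord n r)).filter (fun u => u ≠ ⊥),
      -(SB n r ((univ : Finset (CInjWord n r)).filter (fun v => v < u)))
        = (-1:ℤ)^u.1.length := by
    intro u hu
    simp only [Finset.mem_filter, Finset.mem_univ, true_and] at hu
    rw [SB_below u.1.length u hu rfl]
    ring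
  rw [Finset.sum_congr rfl hstep]
  have hmap : ∀ u ∈ (univ : Finset (CInjWord n r)).filter (fun u => u ≠ ⊥),
      u.1.length ∈ Finset.Icc 1 n := by
    intro u hu
    simp only [Finset.mem_filter, Finset.mem_univ, true_and] at hu
    rw [Finset.mem_Icc]
    refine ⟨?_, length_le_n u⟩
    rcases Nat.eq_zero_or_pos u.1.length with h | h
    · exact absurd (eq_bot_iff_len.2 h) hu
    · omega
  rw [← Finset.sum_fiberwise_of_maps_to hmap (fun u => (-1:ℤ)^u.1.length)]
  have hfib : ∀ ℓ ∈ Finset.Icc 1 n,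
      (∑ u ∈ ((univ : Finset (CInjWord n r)).filter (fun u => u ≠ ⊥)).filter
        (fun u => u.1.length = ℓ), (-1:ℤ)^u.1.length)
        = (-1:ℤ)^ℓ * ((r:ℤ)^ℓ * (n.descFactorial ℓ : ℤ)) := by
    intro ℓ hℓ
    rw [Finset.mem_Icc] at hℓ
    have hset : ((univ : Finset (CInjWord n r)).filter (fun u => u ≠ ⊥)).filter
        (fun u => u.1.length = ℓ)
        = univ.filter (fun u : CInjWord n r => u.1.length = ℓ) := by
      rw [Finset.filter_filter]
      exact card_words_pos ℓ hℓ.1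
    have hconst : ∀ u ∈ (univ : Finset (CInjWord n r)).filter
        (fun u => u.1.length = ℓ), (-1:ℤ)^u.1.length = (-1:ℤ)^ℓ := by
      intro u hu
      rw [Finset.mem_filter] at hu
      rw [hu.2]
    rw [hset, Finset.sum_congr rfl hconst, Finset.sum_const, card_words ℓ, nsmul_eq_mul]
    push_cast
    ring
  rw [Finset.sum_congr rfl hfib]
  have hrange : Finset.range (n+1) = insert 0 (Finset.Icc 1 n) := by
    ext j
    simp only [Finset.mem_range, Finset.mem_insert, Finset.mem_Icc]
    omega
  rw [hrange, Finset.sum_insert (by simp)]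
  simp

lemma part1 :
    cChainDim n r (Finset.Icc 1 n)
      = ∑ i ∈ Finset.range (n + 1),
          (-1:ℤ)^(n-i) * (r:ℤ)^i * (n.descFactorial i : ℤ) := by
  rw [cChainDim, bDim]
  have hcard : (Finset.Icc 1 n).card = n := by rw [Nat.card_Icc]; omega
  have hterm : ∀ T ∈ (Finset.Icc 1 n).powerset,
      (-1:ℤ)^((Finset.Icc 1 n).card - T.card) * (chainCount (rkC n r) T : ℤ)
        = ∑ c ∈ (ChainsF n r).filter
            (fun c => c.image (fun u => u.1.length) = T), (-1:ℤ)^(n - c.card) := by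
    intro T hT
    rw [Finset.mem_powerset] at hT
    have hconst : ∀ c ∈ (ChainsF n r).filter
        (fun c => c.image (fun u => u.1.length) = T),
        (-1:ℤ)^(n - c.card) = (-1:ℤ)^(n - T.card) := by
      intro c hc
      rw [Finset.mem_filter] at hc
      rw [← hc.2, card_image_len hc.1]
    rw [Finset.sum_congr rfl hconst, Finset.sum_const, nsmul_eq_mul,
      chainCount_eq hT, keyFinset_card_eq hT, hcard]
    ring
  rw [Finset.sum_congr rfl hterm]
  have hmaps : ∀ c ∈ ChainsF n r,
      c.image (fun u => u.1.length) ∈ (Finset.Icc 1 n).powerset := by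
    intro c hc
    rw [Finset.mem_powerset]
    exact image_len_subset hc
  rw [Finset.sum_fiberwise_of_maps_to hmaps (fun c => (-1:ℤ)^(n - c.card))]
  have hcc : ∀ c ∈ ChainsF n r, (-1:ℤ)^(n - c.card) = (-1:ℤ)^n * (-1:ℤ)^c.card := by
    intro c hc
    apply neg_one_pow_sub
    rw [← card_image_len hc]
    calc (c.image (fun u => u.1.length)).card ≤ (Finset.Icc 1 n).card :=
          Finset.card_le_card (image_len_subset hc)
      _ = n := hcard
  rw [Finset.sum_congr rfl hcc, ← Finset.mul_sum]
  have hchains : ChainsF n r = (ChainsF n r).filter (fun c => c ⊆ univ) := by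
    rw [Finset.filter_true_of_mem (fun c _ => Finset.subset_univ c)]
  rw [hchains, ← SB, SB_univ, Finset.mul_sum]
  apply Finset.sum_congr rfl
  intro i hi
  rw [Finset.mem_range] at hi
  rw [neg_one_pow_sub (show i ≤ n by omega)]
  ring

end SumEval
section Derangements
variable {n r : ℕ} [NeZero r]

/-- Colorings vanishing on `F` correspond to colorings of the complement. -/
def colorEquiv (F : Finset (Fin n)) :
    {c : Fin n → ZMod r // ∀ i ∈ F, c i = 0} ≃ ({i : Fin n // i ∉ F} → ZMod r) where
  toFun c := fun i => c.1 i.1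
  invFun g := ⟨fun i => if h : i ∈ F then 0 else g ⟨i, h⟩, fun i hi => dif_pos hi⟩
  left_inv c := by
    apply Subtype.ext
    funext i
    by_cases h : i ∈ F
    · simp [h, (c.2 i h).symm]
    · simp [h]
  right_inv g := by
    funext i
    simp [i.2]

/-- Permutations fixing `F` pointwise correspond to permutations of the complement. -/
def permEquiv (F : Finset (Fin n)) :
    {π : Equiv.Perm (Fin n) // ∀ i ∈ F, π i = i} ≃ Equiv.Perm {i : Fin n // i ∉ F} :=
  ((Equiv.subtypeEquivRight (fun f => by
    constructor
    · intro h a hna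
      exact h a (not_not.1 hna)
    · intro h i hi
      exact h i (not_not_intro hi))).trans
    (Equiv.Perm.subtypeEquivSubtypePerm (fun i => i ∉ F)).symm)

lemma card_fixed (F : Finset (Fin n)) :
    (univ.filter (fun u : Equiv.Perm (Fin n) × (Fin n → ZMod r) =>
      ∀ i ∈ F, u.1 i = i ∧ u.2 i = 0)).card
      = (n - F.card).factorial * r^(n - F.card) := by
  rw [← Fintype.card_subtype]
  have e1 : {u : Equiv.Perm (Fin n) × (Fin n → ZMod r) // ∀ i ∈ F, u.1 i = i ∧ u.2 i = 0}
      ≃ {π : Equiv.Perm (Fin n) // ∀ i ∈ F, π i = i}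
        × {c : Fin n → ZMod r // ∀ i ∈ F, c i = 0} := by
    refine (Equiv.subtypeEquivRight ?_).trans (Equiv.subtypeProdEquivProd)
    intro u
    constructor
    · intro h
      exact ⟨fun i hi => (h i hi).1, fun i hi => (h i hi).2⟩
    · intro h i hi
      exact ⟨h.1 i hi, h.2 i hi⟩
  have hcompl : Fintype.card {i : Fin n // i ∉ F} = n - F.card := by
    rw [Fintype.card_subtype_compl]
    simp [Fintype.card_coe]
  rw [Fintype.card_congr e1, Fintype.card_prod, Fintype.card_congr (permEquiv F),
    Fintype.card_congr (colorEquiv F), Fintype.card_perm, Fintype.card_fun, ZMod.card,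
    hcompl]

lemma part2 :
    (Nat.card {u : Equiv.Perm (Fin n) × (Fin n → ZMod r) //
        ∀ i : Fin n, ¬(u.1 i = i ∧ u.2 i = 0)} : ℤ)
      = ∑ i ∈ Finset.range (n + 1),
          (-1:ℤ)^(n-i) * (r:ℤ)^i * (n.descFactorial i : ℤ) := by
  rw [Nat.card_eq_fintype_card, Fintype.card_subtype]
  have hfix : ∀ u : Equiv.Perm (Fin n) × (Fin n → ZMod r),
      (∀ i : Fin n, ¬(u.1 i = i ∧ u.2 i = 0))
        ↔ univ.filter (fun i : Fin n => u.1 i = i ∧ u.2 i = 0) = ∅ := by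
    intro u
    rw [Finset.filter_eq_empty_iff]
    simp
  have step1 : ((univ.filter (fun u : Equiv.Perm (Fin n) × (Fin n → ZMod r) =>
      ∀ i : Fin n, ¬(u.1 i = i ∧ u.2 i = 0))).card : ℤ)
      = ∑ u : Equiv.Perm (Fin n) × (Fin n → ZMod r),
          ∑ F ∈ (univ.filter (fun i : Fin n => u.1 i = i ∧ u.2 i = 0)).powerset,
            (-1:ℤ)^F.card := by
    rw [Finset.card_filter]
    push_cast
    apply Finset.sum_congr rfl
    intro u _
    rw [Finset.sum_powerset_neg_one_pow_card]
    by_cases h : (∀ i : Fin n, ¬(u.1 i = i ∧ u.2 i = 0))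
    · rw [if_pos ((hfix u).1 h), if_pos h]
    · rw [if_neg (fun he => h ((hfix u).2 he)), if_neg h]
  rw [step1]
  have step2 : ∀ u : Equiv.Perm (Fin n) × (Fin n → ZMod r),
      (∑ F ∈ (univ.filter (fun i : Fin n => u.1 i = i ∧ u.2 i = 0)).powerset,
        (-1:ℤ)^F.card)
      = ∑ F ∈ (univ : Finset (Fin n)).powerset,
          if (∀ i ∈ F, u.1 i = i ∧ u.2 i = 0) then (-1:ℤ)^F.card else 0 := by
    intro u
    rw [← Finset.sum_filter]
    congr 1
    ext F
    simp only [Finset.mem_powerset, Finset.mem_filter]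
    constructor
    · intro h
      refine ⟨Finset.subset_univ F, fun i hi => ?_⟩
      have := h hi
      rw [Finset.mem_filter] at this
      exact this.2
    · intro h i hi
      rw [Finset.mem_filter]
      exact ⟨mem_univ i, h.2 i hi⟩
  rw [Finset.sum_congr rfl (fun u _ => step2 u), Finset.sum_comm]
  have step3 : ∀ F ∈ (univ : Finset (Fin n)).powerset,
      (∑ u : Equiv.Perm (Fin n) × (Fin n → ZMod r),
        if (∀ i ∈ F, u.1 i = i ∧ u.2 i = 0) then (-1:ℤ)^F.card else 0)
      = (-1:ℤ)^F.card * ((n - F.card).factorial * r^(n - F.card) : ℕ) := by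
    intro F _
    rw [← Finset.sum_filter, Finset.sum_const, card_fixed F, nsmul_eq_mul]
    ring
  rw [Finset.sum_congr rfl step3]
  have huniv : ((univ : Finset (Fin n))).card = n := by simp
  rw [Finset.sum_powerset _ (fun F => (-1:ℤ)^F.card *
    ((n - F.card).factorial * r^(n - F.card) : ℕ))]
  have step4 : ∀ j ∈ Finset.range (((univ : Finset (Fin n))).card + 1),
      (∑ F ∈ Finset.powersetCard j (univ : Finset (Fin n)),
        (-1:ℤ)^F.card * ((n - F.card).factorial * r^(n - F.card) : ℕ))
      = (n.choose j : ℤ) * ((-1:ℤ)^j * ((n - j).factorial * r^(n - j) : ℕ)) := by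
    intro j _
    have hconst : ∀ F ∈ Finset.powersetCard j (univ : Finset (Fin n)),
        (-1:ℤ)^F.card * ((n - F.card).factorial * r^(n - F.card) : ℕ)
        = (-1:ℤ)^j * ((n - j).factorial * r^(n - j) : ℕ) := by
      intro F hF
      rw [(Finset.mem_powersetCard.1 hF).2]
    rw [Finset.sum_congr rfl hconst, Finset.sum_const, Finset.card_powersetCard,
      huniv, nsmul_eq_mul]
  rw [Finset.sum_congr rfl step4, huniv]
  rw [← Finset.sum_range_reflect]
  apply Finset.sum_congr rfl
  intro i hi
  rw [Finset.mem_range] at hi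
  have h1 : n + 1 - 1 - i = n - i := by omega
  rw [h1]
  have h2 : n - (n - i) = i := by omega
  rw [h2, Nat.choose_symm (by omega : i ≤ n)]
  have h3 : (n.descFactorial i : ℤ) = (n.choose i : ℤ) * (i.factorial : ℤ) := by
    rw [← Nat.cast_mul]
    congr 1
    rw [Nat.descFactorial_eq_factorial_mul_choose]
    ring
  rw [h3]
  push_cast
  ring

end Derangements
end CInjWordAux

end AuxProof


/-- **Remark 4.7**: `b_P({1,…,n}) = Σ_{i=0}^n (-1)^{n-i} r^i n!/(n-i)! = D_{n,r}`, the
number of derangements (elements without fixed points of zero color) in `𝔖_n[ℤ_r]`. -/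
theorem statement18 (n r : ℕ) (hn : 0 < n) (hr : 0 < r) :
    cChainDim n r (Finset.Icc 1 n) =
        (∑ i ∈ Finset.range (n + 1),
          (-1 : ℤ) ^ (n - i) * (r : ℤ) ^ i * (n.descFactorial i : ℤ)) ∧
    cChainDim n r (Finset.Icc 1 n) =
      (Nat.card {u : Equiv.Perm (Fin n) × (Fin n → ZMod r) //
          ∀ i : Fin n, ¬(u.1 i = i ∧ u.2 i = 0)} : ℤ) := by
  haveI : NeZero r := ⟨hr.ne'⟩
  have h1 := CInjWordAux.part1 (n := n) (r := r)
  have h2 := CInjWordAux.part2 (n := n) (r := r)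
  exact ⟨h1, h1.trans h2.symm⟩
end
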